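/- arXiv:2311.18390 — 9 statements merged into one kernel-verified Lean document; each statement's English description precedes it below -/
import Mathlib

section
/- Let N ≥ 2 and let G = {g_0,…,g_{N−1}} be an ordered set of N complex sequences of length L, and let d = g_0 ∥ g_1 ∥ ⋯ ∥ g_{N−1} be their concatenation (length NL). Then for every integer u with 1 ≤ u < L one has φ(d,d;u) = ρ(G,G;u) + conj(ρ̂(G,G;L−u)), and φ(d,d;L) = conj(ρ̂(G,G;0)). -/
open Finset

noncomputable section

/-- Aperiodic cross-correlation function (ACCF) of two length-`L` complex
sequences at integer shift `u`. -/
def accf (L : ℕ) (a b : ℕ → ℂ) (u : ℤ) : ℂ :=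
  if 0 ≤ u then
    ∑ i ∈ Finset.range (L - u.toNat), a (i + u.toNat) * (starRingEnd ℂ) (b i)
  else
    ∑ i ∈ Finset.range (L - (-u).toNat), a i * (starRingEnd ℂ) (b (i + (-u).toNat))

/-- Periodic cross-correlation function (PCCF) of two length-`L` complex
sequences at integer shift `u`. -/
def pccf (L : ℕ) (a b : ℕ → ℂ) (u : ℤ) : ℂ :=
  ∑ i ∈ Finset.range L, a ((((i : ℤ) + u) % (L : ℤ)).toNat) * (starRingEnd ℂ) (b i)

/-- `ρ(G,H;u) = Σ_{n=0}^{N-1} ρ(g_n, h_n; u)` for two ordered sets of `N`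
length-`L` sequences. -/
def accfSet (L N : ℕ) (G H : ℕ → ℕ → ℂ) (u : ℤ) : ℂ :=
  ∑ n ∈ Finset.range N, accf L (G n) (H n) u

/-- `ρ̂(G,H;u) = Σ_{n=0}^{N-1} ρ(g_n, h_{(n+1) mod N}; u)`. -/
def accfHat (L N : ℕ) (G H : ℕ → ℕ → ℂ) (u : ℤ) : ℂ :=
  ∑ n ∈ Finset.range N, accf L (G n) (H ((n + 1) % N)) u

/-- Concatenation `g_0 ∥ g_1 ∥ ⋯` of length-`L` sequences. -/
def concatSeq (L : ℕ) (G : ℕ → ℕ → ℂ) : ℕ → ℂ := fun i => G (i / L) (i % L)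

lemma sum_range_mul_eq (N L : ℕ) (f : ℕ → ℂ) :
    ∑ i ∈ Finset.range (N * L), f i
      = ∑ n ∈ Finset.range N, ∑ j ∈ Finset.range L, f (n * L + j) := by
  induction N with
  | zero => simp
  | succ n ih => rw [Nat.succ_mul, Finset.sum_range_add, ih, Finset.sum_range_succ]

lemma dval (L : ℕ) (G : ℕ → ℕ → ℂ) (n j : ℕ) (hj : j < L) :
    concatSeq L G (n * L + j) = G n j := by
  have hL : 0 < L := by omega
  simp [concatSeq, mul_comm n L, Nat.mul_add_div hL, Nat.div_eq_of_lt hj,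
    Nat.mul_add_mod, Nat.mod_eq_of_lt hj]

lemma toNat_mod (m u k : ℕ) :
    ((((m : ℕ) : ℤ) + (u : ℤ)) % ((k : ℕ) : ℤ)).toNat = (m + u) % k := by
  have h : ((m : ℤ)) + (u : ℤ) = ((m + u : ℕ) : ℤ) := by push_cast; ring
  rw [h, ← Int.natCast_mod, Int.toNat_natCast]

lemma key (L N : ℕ) (hN : 1 ≤ N) (G : ℕ → ℕ → ℂ) (u : ℕ) (hu1 : 1 ≤ u) (hu2 : u ≤ L) :
    pccf (N * L) (concatSeq L G) (concatSeq L G) (u : ℤ) =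
      (∑ n ∈ Finset.range N, ∑ j ∈ Finset.range (L - u),
        G n (j + u) * (starRingEnd ℂ) (G n j))
    + ∑ n ∈ Finset.range N, ∑ k ∈ Finset.range u,
        G ((n + 1) % N) k * (starRingEnd ℂ) (G n ((L - u) + k)) := by
  have hL : 0 < L := by omega
  unfold pccf
  rw [sum_range_mul_eq, ← Finset.sum_add_distrib]
  refine Finset.sum_congr rfl (fun n hn => ?_)
  have hn' : n < N := Finset.mem_range.mp hn
  rw [show Finset.range L = Finset.range ((L - u) + u) by rw [Nat.sub_add_cancel hu2],
    Finset.sum_range_add]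
  congr 1
  · refine Finset.sum_congr rfl (fun j hj => ?_)
    have hj' : j < L - u := Finset.mem_range.mp hj
    have hju : j + u < L := by omega
    have hlt : n * L + j + u < N * L := by
      have h2 : (n + 1) * L ≤ N * L := Nat.mul_le_mul_right L hn'
      have h3 : (n + 1) * L = n * L + L := by ring
      omega
    rw [toNat_mod, Nat.mod_eq_of_lt hlt, dval L G n j (by omega),
      show n * L + j + u = n * L + (j + u) by ring, dval L G n (j + u) hju]
  · refine Finset.sum_congr rfl (fun k hk => ?_)
    have hk' : k < u := Finset.mem_range.mp hk
    have hidx : n * L + ((L - u) + k) + u = (n + 1) * L + k := by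
      have : (n + 1) * L = n * L + L := by ring
      omega
    rw [toNat_mod, hidx, dval L G n ((L - u) + k) (by omega)]
    rcases Nat.lt_or_ge (n + 1) N with h | h
    · have hlt : (n + 1) * L + k < N * L := by
        have h2 : (n + 2) * L ≤ N * L := Nat.mul_le_mul_right L (by omega)
        have h3 : (n + 2) * L = (n + 1) * L + L := by ring
        omega
      rw [Nat.mod_eq_of_lt hlt, dval L G (n + 1) k (by omega), Nat.mod_eq_of_lt h]
    · have hnN : n + 1 = N := by omega
      have hkL : k < N * L := by
        have : L ≤ N * L := Nat.le_mul_of_pos_left L hN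
        omega
      rw [hnN, Nat.add_mod_left, Nat.mod_eq_of_lt hkL, Nat.mod_self]
      have hd : concatSeq L G k = G 0 k := by simpa using dval L G 0 k (by omega)
      rw [hd]

theorem stmt1 (L N : ℕ) (hN : 2 ≤ N) (G : ℕ → ℕ → ℂ) :
    (∀ u : ℤ, 1 ≤ u → u < (L : ℤ) →
      pccf (N * L) (concatSeq L G) (concatSeq L G) u
        = accfSet L N G G u + (starRingEnd ℂ) (accfHat L N G G ((L : ℤ) - u))) ∧
    pccf (N * L) (concatSeq L G) (concatSeq L G) (L : ℤ)
      = (starRingEnd ℂ) (accfHat L N G G 0) := by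
  constructor
  · intro u hu1 huL
    obtain ⟨u', rfl⟩ : ∃ u' : ℕ, u = (u' : ℤ) :=
      ⟨u.toNat, (Int.toNat_of_nonneg (by omega)).symm⟩
    have hu1' : 1 ≤ u' := by exact_mod_cast hu1
    have huL' : u' < L := by exact_mod_cast huL
    rw [key L N (by omega) G u' hu1' (by omega)]
    have h1 : accfSet L N G G (u' : ℤ)
        = ∑ n ∈ Finset.range N, ∑ j ∈ Finset.range (L - u'),
            G n (j + u') * (starRingEnd ℂ) (G n j) := by
      unfold accfSet accf
      refine Finset.sum_congr rfl (fun n _ => ?_)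
      rw [if_pos (by positivity)]
      simp
    have h2 : (starRingEnd ℂ) (accfHat L N G G ((L : ℤ) - (u' : ℤ)))
        = ∑ n ∈ Finset.range N, ∑ k ∈ Finset.range u',
            G ((n + 1) % N) k * (starRingEnd ℂ) (G n ((L - u') + k)) := by
      unfold accfHat accf
      rw [map_sum]
      refine Finset.sum_congr rfl (fun n _ => ?_)
      rw [if_pos (by omega : (0 : ℤ) ≤ (L : ℤ) - (u' : ℤ))]
      have ht : ((L : ℤ) - (u' : ℤ)).toNat = L - u' := by omega
      rw [ht, show L - (L - u') = u' by omega, map_sum]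
      refine Finset.sum_congr rfl (fun k _ => ?_)
      rw [map_mul, Nat.add_comm k (L - u')]
      simp [mul_comm]
    rw [h1, h2]
  · by_cases hL : L = 0
    · subst hL
      simp [pccf, accfHat, accf]
    · rw [key L N (by omega) G L (by omega) le_rfl]
      simp only [Nat.sub_self, Finset.range_zero, Finset.sum_empty,
        Finset.sum_const_zero, zero_add]
      unfold accfHat accf
      rw [map_sum]
      refine Finset.sum_congr rfl (fun n _ => ?_)
      rw [if_pos le_rfl]
      simp only [Int.toNat_zero, Nat.sub_zero, add_zero, Nat.zero_add, zero_add, map_sum]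
      refine Finset.sum_congr rfl (fun k _ => ?_)
      rw [map_mul]
      simp [mul_comm]
end
end

section
/- Let N ≥ 2 and let G^{m1} = {g_0^{m1},…,g_{N−1}^{m1}} and G^{m2} = {g_0^{m2},…,g_{N−1}^{m2}} be two ordered sets of N complex sequences of length L, with concatenations d_{m1} = g_0^{m1} ∥ ⋯ ∥ g_{N−1}^{m1} and d_{m2} = g_0^{m2} ∥ ⋯ ∥ g_{N−1}^{m2} (length NL). Then φ(d_{m1},d_{m2};0) = ρ(G^{m1},G^{m2};0); for every integer u with 1 ≤ u < L, φ(d_{m1},d_{m2};u) = ρ(G^{m1},G^{m2};u) + conj(ρ̂(G^{m2},G^{m1};L−u)); and φ(d_{m1},d_{m2};L) = conj(ρ̂(G^{m2},G^{m1};0)). -/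
open Finset

noncomputable section

lemma sum_range_mul' (N L : ℕ) (f : ℕ → ℂ) :
    ∑ i ∈ range (N * L), f i = ∑ n ∈ range N, ∑ j ∈ range L, f (n * L + j) := by
  induction N with
  | zero => simp
  | succ n ih => rw [Nat.succ_mul, Finset.sum_range_add, ih, Finset.sum_range_succ]

lemma concat_mod (L N : ℕ) (hL : 0 < L) (G : ℕ → ℕ → ℂ) (k : ℕ) :
    concatSeq L G (k % (N * L)) = G (k / L % N) (k % L) := by
  unfold concatSeq
  rw [Nat.mod_mul_left_div_self, Nat.mod_mod_of_dvd _ (dvd_mul_left L N)]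

lemma pccf_concat (L N : ℕ) (hL : 0 < L) (G H : ℕ → ℕ → ℂ) (v : ℕ) :
    pccf (N * L) (concatSeq L G) (concatSeq L H) (v : ℤ)
      = ∑ n ∈ range N, ∑ j ∈ range L,
          G ((n + (j + v) / L) % N) ((j + v) % L) * (starRingEnd ℂ) (H n j) := by
  unfold pccf
  rw [sum_range_mul']
  refine Finset.sum_congr rfl fun n hn => Finset.sum_congr rfl fun j hj => ?_
  rw [mem_range] at hn hj
  rw [show (((n * L + j : ℕ) : ℤ) + (v : ℤ)) = ((n * L + j + v : ℕ) : ℤ) by push_cast; ring,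
    ← Int.natCast_mod, Int.toNat_natCast, concat_mod L N hL,
    show n * L + j + v = L * n + (j + v) by ring,
    Nat.mul_add_div hL, Nat.mul_add_mod]
  have h2 : concatSeq L H (n * L + j) = H n j := by
    unfold concatSeq
    rw [show n * L + j = L * n + j by ring, Nat.mul_add_div hL, Nat.mul_add_mod,
      Nat.div_eq_of_lt hj, Nat.mod_eq_of_lt hj, add_zero]
  rw [h2]

theorem stmt2 (L N : ℕ) (hN : 2 ≤ N) (G H : ℕ → ℕ → ℂ) :
    pccf (N * L) (concatSeq L G) (concatSeq L H) 0 = accfSet L N G H 0 ∧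
    (∀ u : ℤ, 1 ≤ u → u < (L : ℤ) →
      pccf (N * L) (concatSeq L G) (concatSeq L H) u
        = accfSet L N G H u + (starRingEnd ℂ) (accfHat L N H G ((L : ℤ) - u))) ∧
    pccf (N * L) (concatSeq L G) (concatSeq L H) (L : ℤ)
      = (starRingEnd ℂ) (accfHat L N H G 0) := by
  refine ⟨?_, ?_, ?_⟩
  · -- u = 0
    rcases Nat.eq_zero_or_pos L with hL | hL
    · subst hL; simp [pccf, accfSet, accf]
    · have := pccf_concat L N hL G H 0
      rw [show ((0:ℕ):ℤ) = (0:ℤ) by norm_num] at this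
      rw [this]
      unfold accfSet accf
      refine Finset.sum_congr rfl fun n hn => ?_
      rw [mem_range] at hn
      rw [if_pos le_rfl]
      simp only [Int.toNat_zero, Nat.sub_zero]
      refine Finset.sum_congr rfl fun j hj => ?_
      rw [mem_range] at hj
      rw [add_zero, Nat.div_eq_of_lt hj, Nat.mod_eq_of_lt hj, add_zero,
        Nat.mod_eq_of_lt hn]
  · -- 1 ≤ u < L
    intro u hu1 huL
    have hL : 0 < L := by omega
    set v : ℕ := u.toNat with hv
    have huv : (v : ℤ) = u := Int.toNat_of_nonneg (by linarith)
    have hv1 : 1 ≤ v := by omega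
    have hvL : v < L := by omega
    rw [← huv, pccf_concat L N hL G H v]
    -- split the inner sum : range L = range ((L - v) + v)
    have main : ∀ n ∈ range N,
        ∑ j ∈ range L, G ((n + (j + v) / L) % N) ((j + v) % L) * (starRingEnd ℂ) (H n j)
          = (∑ j ∈ range (L - v), G n (j + v) * (starRingEnd ℂ) (H n j))
            + ∑ k ∈ range v, G ((n + 1) % N) k * (starRingEnd ℂ) (H n ((L - v) + k)) := by
      intro n hn
      rw [mem_range] at hn
      rw [show range L = range ((L - v) + v) from by rw [Nat.sub_add_cancel hvL.le],
        Finset.sum_range_add]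
      congr 1
      · refine Finset.sum_congr rfl fun j hj => ?_
        rw [mem_range] at hj
        have hjv : j + v < L := by omega
        rw [Nat.div_eq_of_lt hjv, Nat.mod_eq_of_lt hjv, add_zero, Nat.mod_eq_of_lt hn]
      · refine Finset.sum_congr rfl fun k hk => ?_
        rw [mem_range] at hk
        have h1 : (L - v) + k + v = L + k := by omega
        rw [h1]
        have h2 : (L + k) / L = 1 := by
          rw [show L + k = L * 1 + k by ring, Nat.mul_add_div hL, Nat.div_eq_of_lt (by omega)]
        have h3 : (L + k) % L = k := by
          rw [show L + k = L * 1 + k by ring, Nat.mul_add_mod, Nat.mod_eq_of_lt (by omega)]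
        rw [h2, h3]
    rw [Finset.sum_congr rfl main, Finset.sum_add_distrib]
    have hA : ∑ n ∈ range N, ∑ j ∈ range (L - v), G n (j + v) * (starRingEnd ℂ) (H n j)
        = accfSet L N G H (v : ℤ) := by
      unfold accfSet accf
      refine Finset.sum_congr rfl fun n _ => ?_
      rw [if_pos (Int.natCast_nonneg v), Int.toNat_natCast]
    rw [hA]
    congr 1
    -- accfHat part
    unfold accfHat accf
    rw [map_sum]
    refine Finset.sum_congr rfl fun n _ => ?_
    have hLu : ((L : ℤ) - (v:ℤ)) = ((L - v : ℕ) : ℤ) := by omega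
    rw [hLu, if_pos (Int.natCast_nonneg _), Int.toNat_natCast, map_sum]
    have hvv : L - (L - v) = v := by omega
    rw [hvv]
    refine Finset.sum_congr rfl fun k hk => ?_
    rw [map_mul, Complex.conj_conj, mul_comm, add_comm (L - v) k]
  · -- u = L
    rcases Nat.eq_zero_or_pos L with hL | hL
    · subst hL; simp [pccf, accfHat, accf]
    · rw [pccf_concat L N hL G H L]
      unfold accfHat accf
      rw [map_sum]
      refine Finset.sum_congr rfl fun n hn => ?_
      rw [if_pos le_rfl, Int.toNat_zero, Nat.sub_zero, map_sum]
      refine Finset.sum_congr rfl fun j hj => ?_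
      rw [mem_range] at hj
      have h2 : (j + L) / L = 1 := by
        rw [show j + L = L * 1 + j by ring, Nat.mul_add_div hL, Nat.div_eq_of_lt hj]
      have h3 : (j + L) % L = j := by
        rw [show j + L = L * 1 + j by ring, Nat.mul_add_mod, Nat.mod_eq_of_lt hj]
      rw [h2, h3, map_mul]
      simp [mul_comm]
end
end

section
/- (Theorem 2) Let N be even, let 1 ≤ Z+1 ≤ L, and let 𝒮 = {S^0,…,S^{M−1}} be an (M,N,L,Z+1)-ZCCS with S^m = {s_0^m,…,s_{N−1}^m}. For each m define the ordered set G^m = {g_0^m,…,g_{N−1}^m} of sequences of length 2L by g_n^m = s_{2n}^m ∥ s_{2n+1}^m and g_{N/2+n}^m = s_{2n}^m ∥ (−s_{2n+1}^m) for n = 0,1,…,N/2−1. Then 𝒢 = {G^0,…,G^{M−1}} is an (M,N,2L,Z)-E-CZCS. -/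
open Finset

noncomputable section

/-- Membership of `x` in `T1 ∪ T2` where `T1 = {1,…,Z}` and
`T2 = {L-Z,…,L-1}`. -/
def inT12 (L Z : ℕ) (x : ℤ) : Prop :=
  (1 ≤ x ∧ x ≤ (Z : ℤ)) ∨ ((L : ℤ) - (Z : ℤ) ≤ x ∧ x ≤ (L : ℤ) - 1)

/-- `(M,N,L,Z)`-enhanced cross Z-complementary set. -/
def IsECZCS (M N L Z : ℕ) (G : ℕ → ℕ → ℕ → ℂ) : Prop :=
  (∀ m1 m2 : ℕ, m1 < M → m2 < M → ∀ u : ℤ,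
      ((m1 = m2 ∧ inT12 L Z |u| ∧ 1 ≤ |u| ∧ |u| ≤ (L : ℤ) - 1) ∨
        (m1 ≠ m2 ∧ (inT12 L Z |u| ∨ u = 0))) →
      accfSet L N (G m1) (G m2) u = 0) ∧
  (∀ m1 m2 : ℕ, m1 < M → m2 < M → ∀ u : ℤ,
      (L : ℤ) - (Z : ℤ) ≤ |u| ∧ |u| ≤ (L : ℤ) - 1 →
      accfHat L N (G m1) (G m2) u = 0)

/-- `(M,N,L,Z')`-Z-complementary code set. -/
def IsZCCS (M N L Z' : ℕ) (S : ℕ → ℕ → ℕ → ℂ) : Prop :=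
  (∀ m : ℕ, m < M → accfSet L N (S m) (S m) 0 = ((N * L : ℕ) : ℂ)) ∧
  (∀ m : ℕ, m < M → ∀ u : ℤ, 0 < |u| → |u| < (Z' : ℤ) →
    accfSet L N (S m) (S m) u = 0) ∧
  (∀ m1 m2 : ℕ, m1 < M → m2 < M → m1 ≠ m2 → ∀ u : ℤ, |u| < (Z' : ℤ) →
    accfSet L N (S m1) (S m2) u = 0)

/-- The Theorem-2 construction: for `n = 0,…,N/2-1`,
`g_n = s_{2n} ∥ s_{2n+1}` and `g_{N/2+n} = s_{2n} ∥ (−s_{2n+1})`,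
sequences of length `2L`. -/
def gConstr (L N : ℕ) (S : ℕ → ℕ → ℂ) : ℕ → ℕ → ℂ := fun n i =>
  if n < N / 2 then
    (if i < L then S (2 * n) i else S (2 * n + 1) (i - L))
  else
    (if i < L then S (2 * (n - N / 2)) i else -S (2 * (n - N / 2) + 1) (i - L))

namespace ECZAux

def cat (L : ℕ) (x y : ℕ → ℂ) : ℕ → ℂ := fun i => if i < L then x i else y (i - L)

lemma gConstr_lt {L N : ℕ} {S : ℕ → ℕ → ℂ} {n : ℕ} (hn : n < N / 2) :
    gConstr L N S n = cat L (S (2 * n)) (S (2 * n + 1)) := by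
  funext i; simp [gConstr, cat, hn]

lemma gConstr_ge {L N : ℕ} {S : ℕ → ℕ → ℂ} {n : ℕ} (hn : ¬ n < N / 2) :
    gConstr L N S n
      = cat L (S (2 * (n - N / 2))) (fun i => -S (2 * (n - N / 2) + 1) i) := by
  funext i; simp [gConstr, cat, hn]

lemma accf_neg_left (L : ℕ) (a b : ℕ → ℂ) (u : ℤ) :
    accf L (fun i => -a i) b u = -accf L a b u := by
  unfold accf; split <;> simp [neg_mul, Finset.sum_neg_distrib]

lemma accf_neg_right (L : ℕ) (a b : ℕ → ℂ) (u : ℤ) :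
    accf L a (fun i => -b i) u = -accf L a b u := by
  unfold accf; split <;> simp [mul_neg, Finset.sum_neg_distrib]

lemma accf_neg_shift (L : ℕ) (a b : ℕ → ℂ) (t : ℕ) :
    accf L a b (-(t : ℤ)) = (starRingEnd ℂ) (accf L b a (t : ℤ)) := by
  rcases Nat.eq_zero_or_pos t with h | h
  · subst h
    simp [accf, map_sum, map_mul, mul_comm]
  · have h1 : ¬ ((0:ℤ) ≤ -(t:ℤ)) := by omega
    have h2 : (0:ℤ) ≤ (t:ℤ) := by omega
    simp only [accf, if_pos h2, if_neg h1, neg_neg, map_sum, map_mul, Complex.conj_conj,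
      Int.toNat_natCast]
    exact Finset.sum_congr rfl fun i _ => mul_comm _ _

lemma splitLow (L : ℕ) (x y w z : ℕ → ℂ) (t : ℕ) (ht : t < L) :
    accf (2 * L) (cat L x y) (cat L w z) (t : ℤ)
      = accf L x w (t : ℤ) + accf L y z (t : ℤ) + accf L y w ((t : ℤ) - L) := by
  have h0 : (0:ℤ) ≤ (t:ℤ) := by positivity
  have hneg : ¬ ((0:ℤ) ≤ (t:ℤ) - L) := by omega
  have hC : (-((t:ℤ) - (L:ℤ))).toNat = L - t := by omega
  have hLt : L - (L - t) = t := by omega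
  have e1 : 2 * L - t = (L - t) + (t + (L - t)) := by omega
  simp only [accf, if_pos h0, if_neg hneg, hC, hLt, Int.toNat_natCast, e1,
    Finset.sum_range_add]
  have hA : ∀ i ∈ Finset.range (L - t),
      cat L x y (i + t) * (starRingEnd ℂ) (cat L w z i)
        = x (i + t) * (starRingEnd ℂ) (w i) := by
    intro i hi; simp only [Finset.mem_range] at hi
    simp only [cat, if_pos (by omega : i + t < L), if_pos (by omega : i < L)]
  have hB : ∀ i ∈ Finset.range t,
      cat L x y (L - t + i + t) * (starRingEnd ℂ) (cat L w z (L - t + i))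
        = y i * (starRingEnd ℂ) (w (i + (L - t))) := by
    intro i hi; simp only [Finset.mem_range] at hi
    have e2 : L - t + i + t = L + i := by omega
    rw [e2]
    simp only [cat, if_neg (by omega : ¬ L + i < L), if_pos (by omega : L - t + i < L)]
    have e3 : L + i - L = i := by omega
    have e4 : L - t + i = i + (L - t) := by omega
    rw [e3, e4]
  have hCs : ∀ i ∈ Finset.range (L - t),
      cat L x y (L - t + (t + i) + t) * (starRingEnd ℂ) (cat L w z (L - t + (t + i)))
        = y (i + t) * (starRingEnd ℂ) (z i) := by
    intro i hi; simp only [Finset.mem_range] at hi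
    have e2 : L - t + (t + i) + t = L + (i + t) := by omega
    have e5 : L - t + (t + i) = L + i := by omega
    rw [e2, e5]
    simp only [cat, if_neg (by omega : ¬ L + (i + t) < L), if_neg (by omega : ¬ L + i < L)]
    have e3 : L + (i + t) - L = i + t := by omega
    have e6 : L + i - L = i := by omega
    rw [e3, e6]
  rw [Finset.sum_congr rfl hA, Finset.sum_congr rfl hB, Finset.sum_congr rfl hCs]
  ring

lemma splitHighPos (L : ℕ) (x y w z : ℕ → ℂ) (t : ℕ) (ht : L ≤ t) :
    accf (2 * L) (cat L x y) (cat L w z) (t : ℤ) = accf L y w ((t : ℤ) - L) := by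
  have h0 : (0:ℤ) ≤ (t:ℤ) := by positivity
  have h1 : (0:ℤ) ≤ (t:ℤ) - L := by omega
  have hT : ((t:ℤ) - L).toNat = t - L := by omega
  have hr : 2 * L - t = L - (t - L) := by omega
  simp only [accf, if_pos h0, if_pos h1, hT, Int.toNat_natCast, hr]
  refine Finset.sum_congr rfl fun i hi => ?_
  simp only [Finset.mem_range] at hi
  simp only [cat, if_neg (by omega : ¬ i + t < L), if_pos (by omega : i < L)]
  have e : i + t - L = i + (t - L) := by omega
  rw [e]

lemma splitHighNeg (L : ℕ) (x y w z : ℕ → ℂ) (t : ℕ) (hL : 0 < L) (ht : L ≤ t) :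
    accf (2 * L) (cat L x y) (cat L w z) (-(t : ℤ)) = accf L x z ((L : ℤ) - t) := by
  have h1 : ¬ ((0:ℤ) ≤ -(t:ℤ)) := by omega
  have hT : (-(-(t:ℤ))).toNat = t := by omega
  rcases eq_or_lt_of_le ht with h | h
  · subst h
    have h2 : (0:ℤ) ≤ (L:ℤ) - L := by omega
    have h3 : ((L:ℤ) - L).toNat = 0 := by omega
    simp only [accf, if_neg h1, if_pos h2, hT, h3, Nat.sub_zero, Nat.add_zero,
      two_mul, Nat.add_sub_cancel]
    refine Finset.sum_congr rfl fun i hi => ?_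
    simp only [Finset.mem_range] at hi
    simp only [cat, if_pos hi, if_neg (by omega : ¬ i + L < L)]
    have e : i + L - L = i := by omega
    rw [e]
  · have h2 : ¬ ((0:ℤ) ≤ (L:ℤ) - t) := by omega
    have h3 : (-((L:ℤ) - t)).toNat = t - L := by omega
    have hr : 2 * L - t = L - (t - L) := by omega
    simp only [accf, if_neg h1, if_neg h2, hT, h3, hr]
    refine Finset.sum_congr rfl fun i hi => ?_
    simp only [Finset.mem_range] at hi
    simp only [cat, if_pos (by omega : i < L), if_neg (by omega : ¬ i + t < L)]
    have e : i + t - L = i + (t - L) := by omega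
    rw [e]

lemma sum_pairs (K : ℕ) (f : ℕ → ℂ) :
    ∑ n ∈ Finset.range (K + K), f n = ∑ n ∈ Finset.range K, (f n + f (K + n)) := by
  rw [Finset.sum_range_add, ← Finset.sum_add_distrib]

lemma sum_two_mul (K : ℕ) (f : ℕ → ℂ) :
    ∑ n ∈ Finset.range K, (f (2 * n) + f (2 * n + 1)) = ∑ k ∈ Finset.range (K + K), f k := by
  induction K with
  | zero => simp
  | succ K ih =>
    have e : K + 1 + (K + 1) = (K + K) + 1 + 1 := by omega
    rw [Finset.sum_range_succ, ih, e, Finset.sum_range_succ, Finset.sum_range_succ]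
    have e2 : 2 * K = K + K := by omega
    rw [e2]
    ring


lemma gLow (L K : ℕ) (S1 S2 : ℕ → ℕ → ℂ) (t : ℕ) (ht : t < L) :
    accfSet (2 * L) (K + K) (gConstr L (K + K) S1) (gConstr L (K + K) S2) (t : ℤ)
      = 2 * accfSet L (K + K) S1 S2 (t : ℤ) := by
  unfold accfSet
  rw [sum_pairs]
  have hterm : ∀ n ∈ Finset.range K,
      (accf (2*L) (gConstr L (K+K) S1 n) (gConstr L (K+K) S2 n) (t:ℤ) +
       accf (2*L) (gConstr L (K+K) S1 (K+n)) (gConstr L (K+K) S2 (K+n)) (t:ℤ))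
      = 2 * (accf L (S1 (2*n)) (S2 (2*n)) (t:ℤ) + accf L (S1 (2*n+1)) (S2 (2*n+1)) (t:ℤ)) := by
    intro n hn
    simp only [Finset.mem_range] at hn
    rw [gConstr_lt (by omega : n < (K+K)/2), gConstr_lt (by omega : n < (K+K)/2),
        gConstr_ge (by omega : ¬ K + n < (K+K)/2), gConstr_ge (by omega : ¬ K + n < (K+K)/2)]
    have e : K + n - (K + K) / 2 = n := by omega
    simp only [e]
    rw [splitLow _ _ _ _ _ _ ht, splitLow _ _ _ _ _ _ ht]
    simp only [accf_neg_left, accf_neg_right]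
    ring
  rw [Finset.sum_congr rfl hterm, ← Finset.mul_sum,
    sum_two_mul K (fun k => accf L (S1 k) (S2 k) (t:ℤ))]

lemma gHighPos (L K : ℕ) (S1 S2 : ℕ → ℕ → ℂ) (t : ℕ) (ht : L ≤ t) :
    accfSet (2 * L) (K + K) (gConstr L (K + K) S1) (gConstr L (K + K) S2) (t : ℤ) = 0 := by
  unfold accfSet
  rw [sum_pairs]
  refine Finset.sum_eq_zero fun n hn => ?_
  simp only [Finset.mem_range] at hn
  rw [gConstr_lt (by omega : n < (K+K)/2), gConstr_lt (by omega : n < (K+K)/2),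
      gConstr_ge (by omega : ¬ K + n < (K+K)/2), gConstr_ge (by omega : ¬ K + n < (K+K)/2)]
  have e : K + n - (K + K) / 2 = n := by omega
  simp only [e]
  rw [splitHighPos _ _ _ _ _ _ ht, splitHighPos _ _ _ _ _ _ ht, accf_neg_left]
  ring

lemma accfSet_negshift (L N : ℕ) (G H : ℕ → ℕ → ℂ) (t : ℕ) :
    accfSet L N G H (-(t : ℤ)) = (starRingEnd ℂ) (accfSet L N H G (t : ℤ)) := by
  unfold accfSet
  rw [map_sum]
  exact Finset.sum_congr rfl fun n _ => accf_neg_shift L (G n) (H n) t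

lemma gHatPos (L K : ℕ) (S1 S2 : ℕ → ℕ → ℂ) (t : ℕ) (ht : L ≤ t) :
    accfHat (2 * L) (K + K) (gConstr L (K + K) S1) (gConstr L (K + K) S2) (t : ℤ) = 0 := by
  unfold accfHat
  rw [sum_pairs]
  refine Finset.sum_eq_zero fun n hn => ?_
  simp only [Finset.mem_range] at hn
  rw [gConstr_lt (by omega : n < (K+K)/2), gConstr_ge (by omega : ¬ K + n < (K+K)/2)]
  have e : K + n - (K + K) / 2 = n := by omega
  simp only [e]
  obtain ⟨W, Z1, Z2, h1, h2⟩ :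
      ∃ W Z1 Z2, gConstr L (K+K) S2 ((n + 1) % (K+K)) = cat L W Z1 ∧
        gConstr L (K+K) S2 ((K + n + 1) % (K+K)) = cat L W Z2 := by
    rcases eq_or_lt_of_le (by omega : n + 1 ≤ K) with hc | hc
    · have m1 : (n + 1) % (K + K) = K := by
        rw [hc]; exact Nat.mod_eq_of_lt (by omega)
      have m2 : (K + n + 1) % (K + K) = 0 := by
        have h3 : K + n + 1 = K + K := by omega
        rw [h3, Nat.mod_self]
      rw [m1, m2, gConstr_ge (by omega : ¬ K < (K+K)/2), gConstr_lt (by omega : 0 < (K+K)/2)]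
      have e2 : K - (K+K)/2 = 0 := by omega
      simp only [e2]
      exact ⟨S2 (2*0), _, _, rfl, rfl⟩
    · have m1 : (n + 1) % (K + K) = n + 1 := Nat.mod_eq_of_lt (by omega)
      have m2 : (K + n + 1) % (K + K) = K + n + 1 := Nat.mod_eq_of_lt (by omega)
      rw [m1, m2, gConstr_lt (by omega : n + 1 < (K+K)/2),
          gConstr_ge (by omega : ¬ K + n + 1 < (K+K)/2)]
      have e2 : K + n + 1 - (K+K)/2 = n + 1 := by omega
      simp only [e2]
      exact ⟨S2 (2*(n+1)), _, _, rfl, rfl⟩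
  rw [h1, h2, splitHighPos _ _ _ _ _ _ ht, splitHighPos _ _ _ _ _ _ ht, accf_neg_left]
  ring

lemma gHatNeg (L K : ℕ) (S1 S2 : ℕ → ℕ → ℂ) (t : ℕ) (hL : 0 < L) (ht : L ≤ t) :
    accfHat (2 * L) (K + K) (gConstr L (K + K) S1) (gConstr L (K + K) S2) (-(t : ℤ)) = 0 := by
  unfold accfHat
  rw [sum_pairs]
  refine Finset.sum_eq_zero fun n hn => ?_
  simp only [Finset.mem_range] at hn
  rw [gConstr_lt (by omega : n < (K+K)/2), gConstr_ge (by omega : ¬ K + n < (K+K)/2)]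
  have e : K + n - (K + K) / 2 = n := by omega
  simp only [e]
  obtain ⟨W1, W2, Z, h1, h2⟩ :
      ∃ W1 W2 Z, gConstr L (K+K) S2 ((n + 1) % (K+K)) = cat L W1 Z ∧
        gConstr L (K+K) S2 ((K + n + 1) % (K+K)) = cat L W2 (fun i => -Z i) := by
    rcases eq_or_lt_of_le (by omega : n + 1 ≤ K) with hc | hc
    · have m1 : (n + 1) % (K + K) = K := by
        rw [hc]; exact Nat.mod_eq_of_lt (by omega)
      have m2 : (K + n + 1) % (K + K) = 0 := by
        have h3 : K + n + 1 = K + K := by omega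
        rw [h3, Nat.mod_self]
      rw [m1, m2, gConstr_ge (by omega : ¬ K < (K+K)/2), gConstr_lt (by omega : 0 < (K+K)/2)]
      have e2 : K - (K+K)/2 = 0 := by omega
      simp only [e2]
      refine ⟨S2 (2*0), S2 (2*0), fun i => -S2 (2*0+1) i, rfl, ?_⟩
      funext i
      simp [cat]
    · have m1 : (n + 1) % (K + K) = n + 1 := Nat.mod_eq_of_lt (by omega)
      have m2 : (K + n + 1) % (K + K) = K + n + 1 := Nat.mod_eq_of_lt (by omega)
      rw [m1, m2, gConstr_lt (by omega : n + 1 < (K+K)/2),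
          gConstr_ge (by omega : ¬ K + n + 1 < (K+K)/2)]
      have e2 : K + n + 1 - (K+K)/2 = n + 1 := by omega
      simp only [e2]
      exact ⟨S2 (2*(n+1)), S2 (2*(n+1)), S2 (2*(n+1)+1), rfl, rfl⟩
  rw [h1, h2, splitHighNeg _ _ _ _ _ _ hL ht, splitHighNeg _ _ _ _ _ _ hL ht, accf_neg_right]
  ring

end ECZAux

open ECZAux in
theorem stmt6 (M N L Z : ℕ) (hN : Even N) (hZL : Z + 1 ≤ L)
    (S : ℕ → ℕ → ℕ → ℂ) (hS : IsZCCS M N L (Z + 1) S) :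
    IsECZCS M N (2 * L) Z (fun m => gConstr L N (S m)) := by
  obtain ⟨K, hK⟩ := hN
  subst hK
  have hL : 0 < L := by omega
  obtain ⟨hS1, hS2, hS3⟩ := hS
  have hZcast : (Z : ℤ) + 1 ≤ (L : ℤ) := by exact_mod_cast hZL
  have main : ∀ m1 m2 : ℕ, m1 < M → m2 < M → ∀ t : ℕ,
      ((m1 = m2 ∧ inT12 (2 * L) Z |(t : ℤ)| ∧ 1 ≤ |(t:ℤ)| ∧ |(t:ℤ)| ≤ ((2*L : ℕ) : ℤ) - 1) ∨
        (m1 ≠ m2 ∧ (inT12 (2 * L) Z |(t:ℤ)| ∨ (t:ℤ) = 0))) →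
      accfSet (2 * L) (K + K) (gConstr L (K+K) (S m1)) (gConstr L (K+K) (S m2)) (t : ℤ) = 0 := by
    intro m1 m2 hm1 hm2 t hcase
    have habs : |(t:ℤ)| = (t:ℤ) := abs_of_nonneg (by positivity)
    rw [habs] at hcase
    have hcases : (t ≤ Z ∧ (m1 = m2 → 1 ≤ t)) ∨ L ≤ t := by
      rcases hcase with ⟨heq, hT, h1, _⟩ | ⟨hne, hT | h0⟩
      · rcases hT with ⟨a, b⟩ | ⟨a, b⟩
        · exact Or.inl ⟨by omega, fun _ => by omega⟩
        · push_cast at a b; right; omega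
      · rcases hT with ⟨a, b⟩ | ⟨a, b⟩
        · exact Or.inl ⟨by omega, fun h => absurd h hne⟩
        · push_cast at a b; right; omega
      · exact Or.inl ⟨by omega, fun h => absurd h hne⟩
    rcases hcases with ⟨hle, h1⟩ | hge
    · rw [gLow L K _ _ t (by omega)]
      rcases eq_or_ne m1 m2 with he | hne
      · subst he
        have h0t : 1 ≤ t := h1 rfl
        rw [hS2 m1 hm1 (t:ℤ) (by rw [habs]; omega)
          (by rw [habs]; push_cast; omega), mul_zero]
      · rw [hS3 m1 m2 hm1 hm2 hne (t:ℤ) (by rw [habs]; push_cast; omega), mul_zero]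
    · exact gHighPos L K _ _ t hge
  constructor
  · intro m1 m2 hm1 hm2 u hu
    show accfSet (2*L) (K+K) (gConstr L (K+K) (S m1)) (gConstr L (K+K) (S m2)) u = 0
    rcases le_or_gt 0 u with hpos | hneg
    · have hu' : u = ((u.toNat : ℕ) : ℤ) := by omega
      rw [hu'] at hu ⊢
      exact main m1 m2 hm1 hm2 u.toNat hu
    · have hu' : u = -((((-u).toNat : ℕ)) : ℤ) := by omega
      rw [hu'] at hu ⊢
      rw [accfSet_negshift]
      have habs : |(-((((-u).toNat : ℕ)) : ℤ))| = |((((-u).toNat : ℕ)) : ℤ)| := abs_neg _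
      rw [habs] at hu
      have hz : accfSet (2*L) (K+K) (gConstr L (K+K) (S m2)) (gConstr L (K+K) (S m1))
          ((((-u).toNat : ℕ)) : ℤ) = 0 := by
        apply main m2 m1 hm2 hm1
        rcases hu with ⟨heq, hT, hx1, hx2⟩ | ⟨hne, hT⟩
        · exact Or.inl ⟨heq.symm, hT, hx1, hx2⟩
        · refine Or.inr ⟨hne.symm, ?_⟩
          rcases hT with h | h
          · exact Or.inl h
          · right; omega
      rw [hz, map_zero]
  · intro m1 m2 hm1 hm2 u hu
    obtain ⟨ha, hb⟩ := hu
    show accfHat (2*L) (K+K) (gConstr L (K+K) (S m1)) (gConstr L (K+K) (S m2)) u = 0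
    have hgeL : (L:ℤ) ≤ |u| := by push_cast at ha; linarith
    rcases le_or_gt 0 u with hpos | hneg
    · have h2 : (L:ℤ) ≤ u := by rwa [abs_of_nonneg hpos] at hgeL
      have hu' : u = ((u.toNat : ℕ) : ℤ) := by omega
      rw [hu']
      exact gHatPos L K _ _ u.toNat (by omega)
    · have h2 : (L:ℤ) ≤ -u := by rwa [abs_of_neg hneg] at hgeL
      have hu' : u = -((((-u).toNat : ℕ)) : ℤ) := by omega
      rw [hu']
      exact gHatNeg L K _ _ (-u).toNat hL (by omega)
end
end

section
/- (Theorem 2, MOCS case) Let N be even and let 𝒮 = {S^0,…,S^{M−1}} be an (M,N,L)-MOCS with S^m = {s_0^m,…,s_{N−1}^m}. For each m define the ordered set G^m = {g_0^m,…,g_{N−1}^m} of sequences of length 2L by g_n^m = s_{2n}^m ∥ s_{2n+1}^m and g_{N/2+n}^m = s_{2n}^m ∥ (−s_{2n+1}^m) for n = 0,1,…,N/2−1. Then 𝒢 = {G^0,…,G^{M−1}} is an (M,N,2L,L)-E-CZCS. -/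
open Finset

noncomputable section

/-- `(M,N,L)`-mutually orthogonal complementary set. -/
def IsMOCS (M N L : ℕ) (S : ℕ → ℕ → ℕ → ℂ) : Prop :=
  (∀ m : ℕ, m < M → accfSet L N (S m) (S m) 0 = ((N * L : ℕ) : ℂ)) ∧
  (∀ m : ℕ, m < M → ∀ u : ℤ, 0 < |u| → |u| ≤ (L : ℤ) - 1 →
    accfSet L N (S m) (S m) u = 0) ∧
  (∀ m1 m2 : ℕ, m1 < M → m2 < M → m1 ≠ m2 → ∀ u : ℤ, |u| ≤ (L : ℤ) - 1 →
    accfSet L N (S m1) (S m2) u = 0)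

section Aux

lemma accf_conj (L : ℕ) (a b : ℕ → ℂ) (u : ℤ) :
    accf L a b u = (starRingEnd ℂ) (accf L b a (-u)) := by
  rcases lt_trichotomy u 0 with h | h | h
  · simp only [accf]
    rw [if_neg (show ¬ (0:ℤ) ≤ u by omega), if_pos (show (0:ℤ) ≤ -u by omega), map_sum]
    refine Finset.sum_congr rfl fun i _ => ?_
    rw [map_mul, Complex.conj_conj]
    ring
  · subst h
    simp only [accf, neg_zero, if_pos le_rfl, Int.toNat_zero, add_zero, map_sum]
    refine Finset.sum_congr rfl fun i _ => ?_
    rw [map_mul, Complex.conj_conj]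
    ring
  · simp only [accf, neg_neg]
    rw [if_pos (show (0:ℤ) ≤ u by omega), if_neg (show ¬ (0:ℤ) ≤ -u by omega), map_sum]
    refine Finset.sum_congr rfl fun i _ => ?_
    rw [map_mul, Complex.conj_conj]
    ring

lemma accfSet_conj (L N : ℕ) (G H : ℕ → ℕ → ℂ) (u : ℤ) :
    accfSet L N G H u = (starRingEnd ℂ) (accfSet L N H G (-u)) := by
  unfold accfSet
  rw [map_sum]
  exact Finset.sum_congr rfl fun n _ => accf_conj L (G n) (H n) u

lemma accf_flip (L : ℕ) (a a' b b' : ℕ → ℂ) (u : ℤ)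
    (ha1 : ∀ i, i < L → a' i = a i) (ha2 : ∀ i, L ≤ i → a' i = -a i)
    (hb1 : ∀ i, i < L → b' i = b i) (hb2 : ∀ i, L ≤ i → b' i = -b i)
    (hu : (L : ℤ) ≤ |u|) :
    accf (2*L) a' b' u = -accf (2*L) a b u := by
  rcases le_or_gt 0 u with h | h
  · have hL : L ≤ u.toNat := by rw [abs_of_nonneg h] at hu; omega
    simp only [accf, if_pos h]
    rw [← Finset.sum_neg_distrib]
    refine Finset.sum_congr rfl fun i hi => ?_
    rw [Finset.mem_range] at hi
    rw [ha2 _ (by omega), hb1 _ (by omega)]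
    ring
  · have hL : L ≤ (-u).toNat := by rw [abs_of_neg h] at hu; omega
    simp only [accf, if_neg (not_le.mpr h)]
    rw [← Finset.sum_neg_distrib]
    refine Finset.sum_congr rfl fun i hi => ?_
    rw [Finset.mem_range] at hi
    rw [ha1 _ (by omega), hb2 _ (by omega), map_neg]
    ring

lemma gConstr_flip (L N k : ℕ) (hk : N = k + k) (S : ℕ → ℕ → ℂ) (n : ℕ) (hn : n < k) :
    (∀ i, i < L → gConstr L N S (k + n) i = gConstr L N S n i) ∧
    (∀ i, L ≤ i → gConstr L N S (k + n) i = -gConstr L N S n i) := by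
  have h1 : n < N / 2 := by omega
  have h2 : ¬ (k + n < N / 2) := by omega
  have h3 : k + n - N / 2 = n := by omega
  constructor
  · intro i hi
    simp [gConstr, h1, h2, h3, hi]
  · intro i hi
    simp [gConstr, h1, h2, h3, Nat.not_lt.mpr hi]

lemma gConstr_lo (L N k : ℕ) (hk : N = k + k) (S : ℕ → ℕ → ℂ) (n : ℕ) (hn : n < k) :
    gConstr L N S n = fun i => if i < L then S (2*n) i else S (2*n+1) (i - L) := by
  funext i
  simp [gConstr, show n < N / 2 by omega]

lemma gConstr_hi (L N k : ℕ) (hk : N = k + k) (S : ℕ → ℕ → ℂ) (n : ℕ) (hn : n < k) :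
    gConstr L N S (k + n) = fun i => if i < L then S (2*n) i else -S (2*n+1) (i - L) := by
  funext i
  have h2 : ¬ (k + n < N / 2) := by omega
  have h3 : k + n - N / 2 = n := by omega
  simp [gConstr, h2, h3]

lemma split_sum (L v : ℕ) (hv : v < L) (F g h : ℕ → ℂ)
    (h1 : ∀ i, i < L - v → F i = g i)
    (h2 : ∀ i, L - v ≤ i → i < L → F i = 0)
    (h3 : ∀ j, j < L - v → F (L + j) = h j) :
    ∑ i ∈ Finset.range (L + (L - v)), F i
      = ∑ i ∈ Finset.range (L - v), g i + ∑ j ∈ Finset.range (L - v), h j := by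
  rw [Finset.sum_range_add]
  congr 1
  · have hsub : Finset.range (L - v) ⊆ Finset.range L :=
      Finset.range_subset_range.mpr (by omega)
    have hz : ∀ i ∈ Finset.range L, i ∉ Finset.range (L - v) → F i = 0 := by
      intro i hi hni
      rw [Finset.mem_range] at hi
      rw [Finset.mem_range, not_lt] at hni
      exact h2 i hni hi
    rw [← Finset.sum_subset hsub hz]
    exact Finset.sum_congr rfl fun i hi => h1 i (Finset.mem_range.mp hi)
  · exact Finset.sum_congr rfl fun j hj => h3 j (Finset.mem_range.mp hj)

lemma pair_aux (L : ℕ) (s t p q : ℕ → ℂ) (u : ℤ) (hu : 0 ≤ u) (hv : u.toNat < L) :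
    accf (2*L) (fun i => if i < L then s i else t (i - L))
        (fun i => if i < L then p i else q (i - L)) u
      + accf (2*L) (fun i => if i < L then s i else -t (i - L))
        (fun i => if i < L then p i else -q (i - L)) u
      = 2 * (accf L s p u + accf L t q u) := by
  simp only [accf, if_pos hu]
  rw [show 2*L - u.toNat = L + (L - u.toNat) by omega, ← Finset.sum_add_distrib]
  refine Eq.trans (split_sum L u.toNat hv _
      (fun i => 2 * (s (i + u.toNat) * (starRingEnd ℂ) (p i)))
      (fun j => 2 * (t (j + u.toNat) * (starRingEnd ℂ) (q j))) ?_ ?_ ?_) ?_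
  · intro i hi
    simp only [if_pos (show i + u.toNat < L by omega), if_pos (show i < L by omega)]
    ring
  · intro i hi1 hi2
    simp only [if_neg (show ¬ (i + u.toNat < L) by omega), if_pos hi2]
    ring
  · intro j hj
    simp only [if_neg (show ¬ (L + j + u.toNat < L) by omega),
      if_neg (show ¬ (L + j < L) by omega),
      show L + j + u.toNat - L = j + u.toNat by omega,
      show L + j - L = j by omega, map_neg]
    ring
  · rw [mul_add, Finset.mul_sum, Finset.mul_sum]

lemma pair_accf (L N k : ℕ) (hk : N = k + k) (S1 S2 : ℕ → ℕ → ℂ) (n : ℕ) (hn : n < k)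
    (u : ℤ) (hu : 0 ≤ u) (hv : u.toNat < L) :
    accf (2*L) (gConstr L N S1 n) (gConstr L N S2 n) u
      + accf (2*L) (gConstr L N S1 (k + n)) (gConstr L N S2 (k + n)) u
      = 2 * (accf L (S1 (2*n)) (S2 (2*n)) u + accf L (S1 (2*n+1)) (S2 (2*n+1)) u) := by
  rw [gConstr_lo L N k hk S1 n hn, gConstr_lo L N k hk S2 n hn,
    gConstr_hi L N k hk S1 n hn, gConstr_hi L N k hk S2 n hn]
  exact pair_aux L (S1 (2*n)) (S1 (2*n+1)) (S2 (2*n)) (S2 (2*n+1)) u hu hv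

lemma sum_range_double (k : ℕ) (f : ℕ → ℂ) :
    ∑ n ∈ Finset.range (k + k), f n = ∑ n ∈ Finset.range k, (f (2*n) + f (2*n+1)) := by
  induction k with
  | zero => simp
  | succ m ih =>
    rw [show m + 1 + (m + 1) = (m + m) + 1 + 1 by omega, Finset.sum_range_succ,
      Finset.sum_range_succ, ih, Finset.sum_range_succ,
      show m + m = 2 * m from (two_mul m).symm]
    ring

lemma setSmallPos (L N k : ℕ) (hk : N = k + k) (S1 S2 : ℕ → ℕ → ℂ) (u : ℤ)
    (hu : 0 ≤ u) (hv : u.toNat < L) :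
    accfSet (2*L) N (gConstr L N S1) (gConstr L N S2) u = 2 * accfSet L N S1 S2 u := by
  unfold accfSet
  rw [show Finset.range N = Finset.range (k + k) from by rw [hk],
    Finset.sum_range_add, ← Finset.sum_add_distrib,
    Finset.sum_congr rfl (fun n hn =>
      pair_accf L N k hk S1 S2 n (Finset.mem_range.mp hn) u hu hv),
    ← Finset.mul_sum]
  congr 1
  exact (sum_range_double k (fun n => accf L (S1 n) (S2 n) u)).symm

lemma setSmall (L N k : ℕ) (hk : N = k + k) (S1 S2 : ℕ → ℕ → ℂ) (u : ℤ)
    (hu : |u| < (L : ℤ)) :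
    accfSet (2*L) N (gConstr L N S1) (gConstr L N S2) u = 2 * accfSet L N S1 S2 u := by
  rcases le_or_gt 0 u with h | h
  · exact setSmallPos L N k hk S1 S2 u h (by rw [abs_of_nonneg h] at hu; omega)
  · rw [accfSet_conj (2*L) N _ _ u,
      setSmallPos L N k hk S2 S1 (-u) (by omega) (by rw [abs_of_neg h] at hu; omega),
      accfSet_conj L N S1 S2 u, map_mul, map_ofNat]

lemma setFlip (L N k : ℕ) (hk : N = k + k) (S1 S2 : ℕ → ℕ → ℂ) (u : ℤ)
    (hu : (L : ℤ) ≤ |u|) :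
    accfSet (2*L) N (gConstr L N S1) (gConstr L N S2) u = 0 := by
  unfold accfSet
  rw [show Finset.range N = Finset.range (k + k) from by rw [hk],
    Finset.sum_range_add, ← Finset.sum_add_distrib]
  refine Finset.sum_eq_zero fun n hn => ?_
  rw [Finset.mem_range] at hn
  obtain ⟨ha1, ha2⟩ := gConstr_flip L N k hk S1 n hn
  obtain ⟨hb1, hb2⟩ := gConstr_flip L N k hk S2 n hn
  rw [accf_flip L _ _ _ _ u ha1 ha2 hb1 hb2 hu]
  ring

lemma hatFlip (L N k : ℕ) (hk : N = k + k) (S1 S2 : ℕ → ℕ → ℂ) (u : ℤ)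
    (hu : (L : ℤ) ≤ |u|) :
    accfHat (2*L) N (gConstr L N S1) (gConstr L N S2) u = 0 := by
  rcases Nat.eq_zero_or_pos k with hk0 | hk0
  · have hN0 : N = 0 := by omega
    simp [accfHat, hN0]
  · unfold accfHat
    rw [show Finset.range N = Finset.range (k + k) from by rw [hk],
      Finset.sum_range_add, ← Finset.sum_add_distrib]
    refine Finset.sum_eq_zero fun n hn => ?_
    rw [Finset.mem_range] at hn
    obtain ⟨ha1, ha2⟩ := gConstr_flip L N k hk S1 n hn
    have hb : (∀ i, i < L → gConstr L N S2 ((k + n + 1) % N) i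
                  = gConstr L N S2 ((n + 1) % N) i) ∧
        (∀ i, L ≤ i → gConstr L N S2 ((k + n + 1) % N) i
                  = -gConstr L N S2 ((n + 1) % N) i) := by
      rcases eq_or_lt_of_le (Nat.succ_le_of_lt hn) with he | hlt
      · have e1 : (n + 1) % N = k := by
          rw [Nat.mod_eq_of_lt (by omega)]; omega
        have e2 : (k + n + 1) % N = 0 := by
          rw [show k + n + 1 = N by omega, Nat.mod_self]
        rw [e1, e2]
        obtain ⟨hc1, hc2⟩ := gConstr_flip L N k hk S2 0 hk0
        simp only [Nat.add_zero] at hc1 hc2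
        constructor
        · intro i hi
          exact (hc1 i hi).symm
        · intro i hi
          rw [hc2 i hi, neg_neg]
      · have e1 : (n + 1) % N = n + 1 := Nat.mod_eq_of_lt (by omega)
        have e2 : (k + n + 1) % N = k + (n + 1) := by
          rw [Nat.mod_eq_of_lt (by omega)]; omega
        rw [e1, e2]
        exact gConstr_flip L N k hk S2 (n + 1) hlt
    obtain ⟨hb1, hb2⟩ := hb
    rw [accf_flip L _ _ _ _ u ha1 ha2 hb1 hb2 hu]
    ring

end Aux

theorem stmt7 (M N L : ℕ) (hN : Even N)
    (S : ℕ → ℕ → ℕ → ℂ) (hS : IsMOCS M N L S) :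
    IsECZCS M N (2 * L) L (fun m => gConstr L N (S m)) := by
  obtain ⟨k, hk⟩ := hN
  obtain ⟨hm0, hma, hmc⟩ := hS
  constructor
  · intro m1 m2 hm1 hm2 u hyp
    show accfSet (2*L) N (gConstr L N (S m1)) (gConstr L N (S m2)) u = 0
    by_cases hLu : (L : ℤ) ≤ |u|
    · exact setFlip L N k hk (S m1) (S m2) u hLu
    · push_neg at hLu
      have hle : |u| ≤ (L : ℤ) - 1 := by
        have := Int.add_one_le_iff.mpr hLu
        linarith
      rw [setSmall L N k hk (S m1) (S m2) u hLu]
      rcases hyp with ⟨heq, -, h1u, -⟩ | ⟨hne, -⟩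
      · subst heq
        rw [hma m1 hm1 u (by linarith) hle]
        ring
      · rw [hmc m1 m2 hm1 hm2 hne u hle]
        ring
  · intro m1 m2 hm1 hm2 u hu
    obtain ⟨hu1, -⟩ := hu
    show accfHat (2*L) N (gConstr L N (S m1)) (gConstr L N (S m2)) u = 0
    refine hatFlip L N k hk (S m1) (S m2) u ?_
    push_cast at hu1
    linarith
end
end

section
/- Let N be even and let s_0^{m1},…,s_{N−1}^{m1} and s_0^{m2},…,s_{N−1}^{m2} be complex sequences of length L. Define, for n = 0,…,N/2−1, g_n^{m_i} = s_{2n}^{m_i} ∥ s_{2n+1}^{m_i} and g_{N/2+n}^{m_i} = s_{2n}^{m_i} ∥ (−s_{2n+1}^{m_i}) (i = 1,2), sequences of length 2L. Then for every integer u with |u| ≤ L−1, Σ_{n=0}^{N−1} ρ(g_n^{m1}, g_n^{m2}; u) = 2·Σ_{n=0}^{N−1} ρ(s_n^{m1}, s_n^{m2}; u); in particular, the cross terms coming from the concatenation boundaries cancel out. -/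
open Finset

noncomputable section

/-- Concatenation of two length-`L` sequences. -/
def cat (L : ℕ) (x y : ℕ → ℂ) : ℕ → ℂ := fun i => if i < L then x i else y (i - L)

lemma sum_range_pair (M : ℕ) (f : ℕ → ℂ) :
    ∑ n ∈ Finset.range M, (f (2*n) + f (2*n+1)) = ∑ n ∈ Finset.range (M+M), f n := by
  induction M with
  | zero => simp
  | succ m ih =>
      rw [Finset.sum_range_succ, ih, show m+1+(m+1) = (m+m)+1+1 by ring,
        Finset.sum_range_succ, Finset.sum_range_succ, show 2*m = m+m by ring]
      ring

lemma cat_sum_pos (L t : ℕ) (ht : t < L) (a b c d : ℕ → ℂ) :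
    ∑ i ∈ Finset.range (2*L - t), cat L a b (i + t) * (starRingEnd ℂ) (cat L c d i)
      = (∑ i ∈ Finset.range (L - t), a (i + t) * (starRingEnd ℂ) (c i))
        + ((∑ j ∈ Finset.range t, b j * (starRingEnd ℂ) (c (L - t + j)))
          + ∑ i ∈ Finset.range (L - t), b (i + t) * (starRingEnd ℂ) (d i)) := by
  rw [show 2*L - t = (L - t) + (t + (L - t)) by omega, Finset.sum_range_add,
    Finset.sum_range_add]
  congr 1
  · refine Finset.sum_congr rfl fun i hi => ?_
    simp only [Finset.mem_range] at hi
    simp only [cat]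
    rw [if_pos (by omega : i + t < L), if_pos (by omega : i < L)]
  congr 1
  · refine Finset.sum_congr rfl fun j hj => ?_
    simp only [Finset.mem_range] at hj
    simp only [cat]
    rw [if_neg (by omega : ¬ (L - t + j + t < L)), if_pos (by omega : L - t + j < L),
      show L - t + j + t - L = j by omega]
  · refine Finset.sum_congr rfl fun j hj => ?_
    simp only [Finset.mem_range] at hj
    simp only [cat]
    rw [if_neg (by omega : ¬ (L - t + (t + j) + t < L)),
      if_neg (by omega : ¬ (L - t + (t + j) < L)),
      show L - t + (t + j) + t - L = j + t by omega,
      show L - t + (t + j) - L = j by omega]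

lemma cat_sum_neg (L t : ℕ) (ht : t < L) (a b c d : ℕ → ℂ) :
    ∑ i ∈ Finset.range (2*L - t), cat L a b i * (starRingEnd ℂ) (cat L c d (i + t))
      = (∑ i ∈ Finset.range (L - t), a i * (starRingEnd ℂ) (c (i + t)))
        + ((∑ j ∈ Finset.range t, a (L - t + j) * (starRingEnd ℂ) (d j))
          + ∑ i ∈ Finset.range (L - t), b i * (starRingEnd ℂ) (d (i + t))) := by
  rw [show 2*L - t = (L - t) + (t + (L - t)) by omega, Finset.sum_range_add,
    Finset.sum_range_add]
  congr 1
  · refine Finset.sum_congr rfl fun i hi => ?_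
    simp only [Finset.mem_range] at hi
    simp only [cat]
    rw [if_pos (by omega : i < L), if_pos (by omega : i + t < L)]
  congr 1
  · refine Finset.sum_congr rfl fun j hj => ?_
    simp only [Finset.mem_range] at hj
    simp only [cat]
    rw [if_pos (by omega : L - t + j < L), if_neg (by omega : ¬ (L - t + j + t < L)),
      show L - t + j + t - L = j by omega]
  · refine Finset.sum_congr rfl fun j hj => ?_
    simp only [Finset.mem_range] at hj
    simp only [cat]
    rw [if_neg (by omega : ¬ (L - t + (t + j) < L)),
      if_neg (by omega : ¬ (L - t + (t + j) + t < L)),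
      show L - t + (t + j) - L = j by omega,
      show L - t + (t + j) + t - L = j + t by omega]

lemma key_s8 (L : ℕ) (a b c d : ℕ → ℂ) (u : ℤ) (hu : |u| ≤ (L:ℤ) - 1) :
    accf (2*L) (cat L a b) (cat L c d) u
      + accf (2*L) (cat L a (fun i => -(b i))) (cat L c (fun i => -(d i))) u
    = 2 * (accf L a c u + accf L b d u) := by
  by_cases h : 0 ≤ u
  · have ht : u.toNat < L := by
      rw [abs_of_nonneg h] at hu; omega
    simp only [accf, if_pos h]
    rw [cat_sum_pos L u.toNat ht a b c d,
      cat_sum_pos L u.toNat ht a (fun i => -(b i)) c (fun i => -(d i))]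
    simp only [map_neg, mul_neg, neg_mul, neg_neg, Finset.sum_neg_distrib]
    ring
  · push_neg at h
    have ht : (-u).toNat < L := by
      rw [abs_of_neg h] at hu; omega
    simp only [accf, if_neg (not_le.mpr h)]
    rw [cat_sum_neg L (-u).toNat ht a b c d,
      cat_sum_neg L (-u).toNat ht a (fun i => -(b i)) c (fun i => -(d i))]
    simp only [map_neg, mul_neg, neg_mul, neg_neg, Finset.sum_neg_distrib]
    ring

theorem stmt8 (L N : ℕ) (hN : Even N) (s1 s2 : ℕ → ℕ → ℂ) :
    ∀ u : ℤ, |u| ≤ (L : ℤ) - 1 →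
      accfSet (2 * L) N (gConstr L N s1) (gConstr L N s2) u
        = 2 * accfSet L N s1 s2 u := by
  intro u hu
  have hL : 1 ≤ L := by
    rcases Nat.eq_zero_or_pos L with h | h
    · exfalso
      have := abs_nonneg u
      rw [h] at hu
      simp at hu
      omega
    · exact h
  obtain ⟨M, hM⟩ := hN
  subst hM
  have hdiv : (M + M) / 2 = M := by omega
  simp only [accfSet]
  rw [Finset.sum_range_add, ← sum_range_pair M (fun n => accf L (s1 n) (s2 n) u),
    Finset.mul_sum, ← Finset.sum_add_distrib]
  refine Finset.sum_congr rfl fun n hn => ?_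
  simp only [Finset.mem_range] at hn
  have hg1 : gConstr L (M+M) s1 n = cat L (s1 (2*n)) (s1 (2*n+1)) := by
    funext i
    simp only [gConstr, cat, hdiv]
    rw [if_pos hn]
  have hg2 : gConstr L (M+M) s2 n = cat L (s2 (2*n)) (s2 (2*n+1)) := by
    funext i
    simp only [gConstr, cat, hdiv]
    rw [if_pos hn]
  have hg1' : gConstr L (M+M) s1 (M+n) = cat L (s1 (2*n)) (fun i => -(s1 (2*n+1) i)) := by
    funext i
    simp only [gConstr, cat, hdiv]
    rw [if_neg (by omega : ¬ (M+n < M))]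
    simp [Nat.add_sub_cancel_left]
  have hg2' : gConstr L (M+M) s2 (M+n) = cat L (s2 (2*n)) (fun i => -(s2 (2*n+1) i)) := by
    funext i
    simp only [gConstr, cat, hdiv]
    rw [if_neg (by omega : ¬ (M+n < M))]
    simp [Nat.add_sub_cancel_left]
  rw [hg1, hg2, hg1', hg2']
  exact key_s8 L (s1 (2*n)) (s1 (2*n+1)) (s2 (2*n)) (s2 (2*n+1)) u hu
end
end

section
/- Let N be even and let s_0^{m1},…,s_{N−1}^{m1} and s_0^{m2},…,s_{N−1}^{m2} be complex sequences of length L. Define, for n = 0,…,N/2−1, g_n^{m_i} = s_{2n}^{m_i} ∥ s_{2n+1}^{m_i} and g_{N/2+n}^{m_i} = s_{2n}^{m_i} ∥ (−s_{2n+1}^{m_i}) (i = 1,2), sequences of length 2L. Then for every integer u with L ≤ |u| ≤ 2L−1, Σ_{n=0}^{N−1} ρ(g_n^{m1}, g_n^{m2}; u) = 0. -/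
open Finset

noncomputable section

theorem stmt9 (L N : ℕ) (hN : Even N) (s1 s2 : ℕ → ℕ → ℂ) :
    ∀ u : ℤ, (L : ℤ) ≤ |u| → |u| ≤ 2 * (L : ℤ) - 1 →
      accfSet (2 * L) N (gConstr L N s1) (gConstr L N s2) u = 0 := by
  intro u hu1 hu2
  obtain ⟨M, hM⟩ := hN
  subst hM
  have hN2 : (M + M) / 2 = M := by omega
  unfold accfSet
  set f : ℕ → ℂ := fun n => accf (2*L) (gConstr L (M+M) s1 n) (gConstr L (M+M) s2 n) u with hf
  rw [Finset.range_eq_Ico, ← Finset.sum_Ico_consecutive f (by omega : 0 ≤ M) (by omega : M ≤ M+M),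
    ← Finset.range_eq_Ico, Finset.sum_Ico_eq_sum_range, show M+M-M = M from by omega, ← Finset.sum_add_distrib]
  apply Finset.sum_eq_zero
  intro n hn
  simp only [Finset.mem_range] at hn
  have h1 : n < (M+M)/2 := by omega
  have h2 : ¬ (M + n < (M+M)/2) := by omega
  have h3 : M + n - (M+M)/2 = n := by omega
  simp only [hf, accf]
  have key : M + (M + M - M) - M = M := by omega
  rcases le_or_gt 0 u with hu | hu
  · have hL : L ≤ u.toNat := by rw [abs_of_nonneg hu] at hu1; omega
    simp only [if_pos hu, ← Finset.sum_add_distrib]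
    apply Finset.sum_eq_zero
    intro i hi
    simp only [Finset.mem_range] at hi
    have hiL : i < L := by omega
    have hiu : ¬ (i + u.toNat < L) := by omega
    simp only [gConstr, if_pos h1, if_neg h2, h3, if_pos hiL, if_neg hiu]
    ring
  · have hL : L ≤ (-u).toNat := by rw [abs_of_neg hu] at hu1; omega
    simp only [if_neg (not_le.mpr hu), ← Finset.sum_add_distrib]
    apply Finset.sum_eq_zero
    intro i hi
    simp only [Finset.mem_range] at hi
    have hiL : i < L := by omega
    have hiu : ¬ (i + (-u).toNat < L) := by omega
    simp only [gConstr, if_pos h1, if_neg h2, h3, if_pos hiL, if_neg hiu, map_neg]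
    ring
end
end

section
/- Let N be even and let s_0^{m1},…,s_{N−1}^{m1} and s_0^{m2},…,s_{N−1}^{m2} be complex sequences of length L. Define, for n = 0,…,N/2−1, g_n^{m_i} = s_{2n}^{m_i} ∥ s_{2n+1}^{m_i} and g_{N/2+n}^{m_i} = s_{2n}^{m_i} ∥ (−s_{2n+1}^{m_i}) (i = 1,2), sequences of length 2L. Then for every integer u with L ≤ |u| ≤ 2L−1, the cross-channel sum Σ_{n=0}^{N−1} ρ(g_n^{m1}, g_{(n+1) mod N}^{m2}; u) = 0. -/
open Finset

noncomputable section

lemma pair_cancel (L N : ℕ) (hN2 : N % 2 = 0) (s1 s2 : ℕ → ℕ → ℂ) (u : ℤ)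
    (h1 : (L : ℤ) ≤ |u|) (h2 : |u| ≤ 2 * (L : ℤ) - 1) (n : ℕ) (hn : n < N / 2) :
    accf (2 * L) (gConstr L N s1 n) (gConstr L N s2 ((n + 1) % N)) u
      + accf (2 * L) (gConstr L N s1 (N / 2 + n)) (gConstr L N s2 ((N / 2 + n + 1) % N)) u
      = 0 := by
  -- determine the index of the (n+1) mod N sequences' relevant half
  have hNN : N = N / 2 + N / 2 := by omega
  have hidx1 : (n + 1) % N = n + 1 := Nat.mod_eq_of_lt (by omega)
  rcases lt_or_ge (n + 1) (N / 2) with hcase | hcase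
  · -- n + 1 < N/2
    have hidx2 : (N / 2 + n + 1) % N = N / 2 + n + 1 := Nat.mod_eq_of_lt (by omega)
    rcases le_or_gt 0 u with hu | hu
    · rw [abs_of_nonneg hu] at h1 h2
      have ht1 : L ≤ u.toNat := by omega
      have ht2 : u.toNat ≤ 2 * L - 1 := by omega
      simp only [accf, if_pos hu, ← Finset.sum_add_distrib]
      refine Finset.sum_eq_zero fun i hi => ?_
      simp only [Finset.mem_range] at hi
      have hiL : i < L := by omega
      have hiU : ¬ (i + u.toNat < L) := by omega
      simp only [gConstr, hidx1, hidx2, if_pos hn, if_pos hcase, if_pos hiL, if_neg hiU,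
        if_neg (show ¬ N / 2 + n < N / 2 by omega),
        if_neg (show ¬ N / 2 + n + 1 < N / 2 by omega)]
      have : N / 2 + n - N / 2 = n := by omega
      have h' : N / 2 + n + 1 - N / 2 = n + 1 := by omega
      rw [this, h']
      ring
    · rw [abs_of_neg hu] at h1 h2
      have hu' : ¬ (0 ≤ u) := not_le.mpr hu
      have ht1 : L ≤ (-u).toNat := by omega
      have ht2 : (-u).toNat ≤ 2 * L - 1 := by omega
      simp only [accf, if_neg hu', ← Finset.sum_add_distrib]
      refine Finset.sum_eq_zero fun i hi => ?_
      simp only [Finset.mem_range] at hi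
      have hiL : i < L := by omega
      have hiU : ¬ (i + (-u).toNat < L) := by omega
      simp only [gConstr, hidx1, hidx2, if_pos hn, if_pos hcase, if_pos hiL, if_neg hiU,
        if_neg (show ¬ N / 2 + n < N / 2 by omega),
        if_neg (show ¬ N / 2 + n + 1 < N / 2 by omega)]
      have : N / 2 + n - N / 2 = n := by omega
      have h' : N / 2 + n + 1 - N / 2 = n + 1 := by omega
      rw [this, h']
      simp only [map_neg]
      ring
  · -- n + 1 = N/2
    have hc : n + 1 = N / 2 := by omega
    have hidx2 : (N / 2 + n + 1) % N = 0 := by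
      have : N / 2 + n + 1 = N := by omega
      rw [this, Nat.mod_self]
    have h0lt : 0 < N / 2 := by omega
    rcases le_or_gt 0 u with hu | hu
    · rw [abs_of_nonneg hu] at h1 h2
      have ht1 : L ≤ u.toNat := by omega
      have ht2 : u.toNat ≤ 2 * L - 1 := by omega
      simp only [accf, if_pos hu, ← Finset.sum_add_distrib]
      refine Finset.sum_eq_zero fun i hi => ?_
      simp only [Finset.mem_range] at hi
      have hiL : i < L := by omega
      have hiU : ¬ (i + u.toNat < L) := by omega
      simp only [gConstr, hidx1, hidx2, if_pos hn, if_pos hiL, if_neg hiU,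
        if_neg (show ¬ n + 1 < N / 2 by omega), if_pos h0lt,
        if_neg (show ¬ N / 2 + n < N / 2 by omega)]
      have : n + 1 - N / 2 = 0 := by omega
      have h' : N / 2 + n - N / 2 = n := by omega
      rw [this, h']
      ring
    · rw [abs_of_neg hu] at h1 h2
      have hu' : ¬ (0 ≤ u) := not_le.mpr hu
      have ht1 : L ≤ (-u).toNat := by omega
      have ht2 : (-u).toNat ≤ 2 * L - 1 := by omega
      simp only [accf, if_neg hu', ← Finset.sum_add_distrib]
      refine Finset.sum_eq_zero fun i hi => ?_
      simp only [Finset.mem_range] at hi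
      have hiL : i < L := by omega
      have hiU : ¬ (i + (-u).toNat < L) := by omega
      simp only [gConstr, hidx1, hidx2, if_pos hn, if_pos hiL, if_neg hiU,
        if_neg (show ¬ n + 1 < N / 2 by omega), if_pos h0lt,
        if_neg (show ¬ N / 2 + n < N / 2 by omega)]
      have : n + 1 - N / 2 = 0 := by omega
      have h' : N / 2 + n - N / 2 = n := by omega
      rw [this, h']
      simp only [map_neg]
      ring

theorem stmt10 (L N : ℕ) (hN : Even N) (s1 s2 : ℕ → ℕ → ℂ) :
    ∀ u : ℤ, (L : ℤ) ≤ |u| → |u| ≤ 2 * (L : ℤ) - 1 →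
      accfHat (2 * L) N (gConstr L N s1) (gConstr L N s2) u = 0 := by
  intro u h1 h2
  have hN2 : N % 2 = 0 := Nat.even_iff.mp hN
  unfold accfHat
  have hNN : N = N / 2 + N / 2 := by omega
  rw [hNN, Finset.sum_range_add, ← Finset.sum_add_distrib]
  refine Finset.sum_eq_zero fun n hn => ?_
  simp only [Finset.mem_range] at hn
  rw [← hNN]
  exact pair_cancel L N hN2 s1 s2 u h1 h2 n hn
end
end

section
/- (Training matrix, Case 1: same antenna block) In the E-CZCS training setting with N ≥ 2, let k and l belong to the same block B_v for some 1 ≤ v ≤ V. Then for every integer u with 0 ≤ u ≤ Z, φ(x_k, x_l; u) = ρ(G^{m_k}, G^{m_l}; u); consequently φ(x_k, x_l; u) = 0 whenever (k = l and 1 ≤ u ≤ Z) or (k ≠ l and 0 ≤ u ≤ Z). -/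
open Finset

noncomputable section

/-- The base row `r_m = g_0^m ∥ 0^{(V-1)L} ∥ g_1^m ∥ 0^{(V-1)L} ∥ ⋯`
(length `N·V·L`) built from the sequences of `G^m`. -/
def baseRow (L V : ℕ) (Gm : ℕ → ℕ → ℂ) : ℕ → ℂ := fun i =>
  if i % (V * L) < L then Gm (i / (V * L)) (i % (V * L)) else 0

/-- The training sequence `x_p` (for `1 ≤ p ≤ V·N_a`): the cyclic right shift
of the base row `r_{(p-1) mod N_a}` by `((p-1)/N_a)·L = (v(p)-1)·L` positions,
where `v(p) = ⌈p/N_a⌉`. -/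
def trainSeq (L N V Na : ℕ) (G : ℕ → ℕ → ℕ → ℂ) (p : ℕ) : ℕ → ℂ := fun i =>
  baseRow L V (G ((p - 1) % Na))
    ((((i : ℤ) - (((p - 1) / Na : ℕ) : ℤ) * (L : ℤ)) % ((N * V * L : ℕ) : ℤ)).toNat)

lemma sum_range_rotate (n c : ℕ) (hn : 0 < n) (f : ℕ → ℂ) :
    ∑ i ∈ Finset.range n, f i = ∑ i ∈ Finset.range n, f ((i + c) % n) := by
  have hc : n * (c / n) + c % n = c := Nat.div_add_mod c n
  have hr : c % n < n := Nat.mod_lt _ hn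
  refine Finset.sum_nbij' (fun a => (a + (n - c % n)) % n) (fun a => (a + c) % n)
    (fun a _ => Finset.mem_range.2 (Nat.mod_lt _ hn))
    (fun a _ => Finset.mem_range.2 (Nat.mod_lt _ hn)) ?_ ?_ ?_
  · intro a ha
    have ha' : a < n := Finset.mem_range.1 ha
    have h1 : a + (n - c % n) + c = a + n * (c / n + 1) := by
      rw [Nat.mul_add, Nat.mul_one]; omega
    show ((a + (n - c % n)) % n + c) % n = a
    rw [Nat.mod_add_mod, h1, Nat.add_mul_mod_self_left, Nat.mod_eq_of_lt ha']
  · intro a ha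
    have ha' : a < n := Finset.mem_range.1 ha
    have h1 : a + c + (n - c % n) = a + n * (c / n + 1) := by
      rw [Nat.mul_add, Nat.mul_one]; omega
    show ((a + c) % n + (n - c % n)) % n = a
    rw [Nat.mod_add_mod, h1, Nat.add_mul_mod_self_left, Nat.mod_eq_of_lt ha']
  · intro a ha
    have ha' : a < n := Finset.mem_range.1 ha
    have h1 : a + (n - c % n) + c = a + n * (c / n + 1) := by
      rw [Nat.mul_add, Nat.mul_one]; omega
    show f a = f (((a + (n - c % n)) % n + c) % n)
    rw [Nat.mod_add_mod, h1, Nat.add_mul_mod_self_left, Nat.mod_eq_of_lt ha']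

lemma int_emod_sub_emod (a b n : ℤ) : (a % n - b) % n = (a - b) % n := by
  rw [Int.sub_emod, Int.emod_emod_of_dvd a dvd_rfl, ← Int.sub_emod]

/-- core identity: periodic correlation of base rows equals the set ACCF -/
lemma core_identity (L N V : ℕ) (A B : ℕ → ℕ → ℂ) (u : ℕ)
    (hL : 1 ≤ L) (hu : u ≤ L) (hV : 2 ≤ V) :
    ∑ i ∈ Finset.range (N * V * L),
        baseRow L V A ((i + u) % (N * V * L)) * (starRingEnd ℂ) (baseRow L V B i)
      = accfSet L N A B (u : ℤ) := by
  have hW : 0 < V * L := by positivity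
  have hNVL : N * V * L = N * (V * L) := by ring
  rw [hNVL]
  have hsplit :
      ∑ i ∈ Finset.range (N * (V * L)),
          baseRow L V A ((i + u) % (N * (V * L))) * (starRingEnd ℂ) (baseRow L V B i)
        = ∑ p ∈ Finset.range N ×ˢ Finset.range (V * L),
            baseRow L V A (((V * L) * p.1 + p.2 + u) % (N * (V * L))) *
              (starRingEnd ℂ) (baseRow L V B ((V * L) * p.1 + p.2)) := by
    refine Finset.sum_nbij' (fun i => (i / (V * L), i % (V * L)))
      (fun p => (V * L) * p.1 + p.2) ?_ ?_ ?_ ?_ ?_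
    · intro a ha
      have ha' : a < N * (V * L) := Finset.mem_range.1 ha
      refine Finset.mem_product.2 ⟨Finset.mem_range.2 ?_, Finset.mem_range.2 (Nat.mod_lt _ hW)⟩
      exact Nat.div_lt_of_lt_mul (by rwa [Nat.mul_comm] at ha')
    · rintro ⟨a, b⟩ hp
      obtain ⟨h1, h2⟩ := Finset.mem_product.1 hp
      have h1' := Finset.mem_range.1 h1
      have h2' := Finset.mem_range.1 h2
      refine Finset.mem_range.2 ?_
      calc (V * L) * a + b < (V * L) * a + (V * L) := by omega
        _ = (V * L) * (a + 1) := by ring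
        _ ≤ (V * L) * N := Nat.mul_le_mul_left _ (by omega)
        _ = N * (V * L) := by ring
    · intro a _
      exact Nat.div_add_mod a (V * L)
    · rintro ⟨a, b⟩ hp
      obtain ⟨h1, h2⟩ := Finset.mem_product.1 hp
      have h2' := Finset.mem_range.1 h2
      show ((((V * L) * a + b) / (V * L)), (((V * L) * a + b) % (V * L))) = (a, b)
      rw [Nat.mul_add_div hW, Nat.div_eq_of_lt h2', Nat.add_zero, Nat.mul_add_mod,
        Nat.mod_eq_of_lt h2']
    · intro a _
      have : (V * L) * (a / (V * L)) + a % (V * L) = a := Nat.div_add_mod a (V * L)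
      rw [this]
  rw [hsplit, Finset.sum_product]
  unfold accfSet
  refine Finset.sum_congr rfl ?_
  intro n hn
  have hnN : n < N := Finset.mem_range.1 hn
  -- restrict inner sum from range (V*L) to range L
  have hLW : L ≤ V * L := le_mul_of_one_le_left (Nat.zero_le _) (by omega)
  have hzero : ∀ t ∈ Finset.range (V * L), t ∉ Finset.range L →
      baseRow L V A (((V * L) * n + t + u) % (N * (V * L))) *
        (starRingEnd ℂ) (baseRow L V B ((V * L) * n + t)) = 0 := by
    intro t htW ht
    have htW' : t < V * L := Finset.mem_range.1 htW
    have ht' : ¬ t < L := fun h => ht (Finset.mem_range.2 h)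
    have : baseRow L V B ((V * L) * n + t) = 0 := by
      unfold baseRow
      rw [Nat.mul_add_mod, Nat.mod_eq_of_lt htW', if_neg ht']
    rw [this, map_zero, mul_zero]
  rw [← Finset.sum_subset (Finset.range_subset_range.2 hLW) hzero]
  have key : ∀ t ∈ Finset.range L,
      baseRow L V A (((V * L) * n + t + u) % (N * (V * L))) *
        (starRingEnd ℂ) (baseRow L V B ((V * L) * n + t))
      = (if t + u < L then A n (t + u) else 0) * (starRingEnd ℂ) (B n t) := by
    intro t ht
    have htL : t < L := Finset.mem_range.1 ht
    have htu : t + u < V * L := by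
      have : 2 * L ≤ V * L := Nat.mul_le_mul_right _ hV
      omega
    have hlt : (V * L) * n + (t + u) < N * (V * L) := by
      calc (V * L) * n + (t + u) < (V * L) * n + (V * L) := by omega
        _ = (V * L) * (n + 1) := by ring
        _ ≤ (V * L) * N := Nat.mul_le_mul_left _ (by omega)
        _ = N * (V * L) := by ring
    have h1 : (V * L) * n + t + u = (V * L) * n + (t + u) := by omega
    rw [h1, Nat.mod_eq_of_lt hlt]
    congr 1
    · unfold baseRow
      rw [Nat.mul_add_mod, Nat.mod_eq_of_lt htu, Nat.mul_add_div hW,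
        Nat.div_eq_of_lt htu, Nat.add_zero]
    · congr 1
      unfold baseRow
      rw [Nat.mul_add_mod, Nat.mod_eq_of_lt (lt_of_lt_of_le htL hLW),
        Nat.mul_add_div hW, Nat.div_eq_of_lt (lt_of_lt_of_le htL hLW),
        Nat.add_zero, if_pos htL]
  rw [Finset.sum_congr rfl key]
  have hsub : Finset.range (L - u) ⊆ Finset.range L := Finset.range_subset_range.2 (by omega)
  have hzero2 : ∀ t ∈ Finset.range L, t ∉ Finset.range (L - u) →
      (if t + u < L then A n (t + u) else 0) * (starRingEnd ℂ) (B n t) = 0 := by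
    intro t ht ht'
    have h1 : t < L := Finset.mem_range.1 ht
    have h2 : ¬ t < L - u := fun h => ht' (Finset.mem_range.2 h)
    rw [if_neg (by omega), zero_mul]
  rw [← Finset.sum_subset hsub hzero2]
  unfold accf
  rw [if_pos (by positivity : (0:ℤ) ≤ (u:ℤ))]
  simp only [Int.toNat_natCast]
  refine Finset.sum_congr rfl ?_
  intro t ht
  have h1 : t < L - u := Finset.mem_range.1 ht
  rw [if_pos (by omega : t + u < L)]

lemma shift_cancel_base (n0 s L i : ℕ) (hi : i < n0) (hn0 : 0 < n0) :
    (((((i + s * L) % n0 : ℕ) : ℤ) - (s : ℤ) * (L : ℤ)) % (n0 : ℤ)).toNat = i := by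
  rw [Int.natCast_mod, int_emod_sub_emod]
  have h1 : ((i + s * L : ℕ) : ℤ) - (s : ℤ) * (L : ℤ) = (i : ℤ) := by push_cast; ring
  rw [h1, Int.emod_eq_of_lt (by positivity) (by exact_mod_cast hi), Int.toNat_natCast]

lemma shift_cancel_shifted (n0 s L i u : ℕ) (hn0 : 0 < n0) :
    ((((((((i + s * L) % n0 : ℕ) : ℤ) + (u : ℤ)) % (n0 : ℤ)).toNat : ℤ)
        - (s : ℤ) * (L : ℤ)) % (n0 : ℤ)).toNat = (i + u) % n0 := by
  have hn0' : ((n0 : ℤ)) ≠ 0 := by exact_mod_cast hn0.ne'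
  rw [Int.toNat_of_nonneg (Int.emod_nonneg _ hn0'), Int.natCast_mod,
    Int.emod_add_emod, int_emod_sub_emod]
  have h1 : ((i + s * L : ℕ) : ℤ) + (u : ℤ) - (s : ℤ) * (L : ℤ) = ((i + u : ℕ) : ℤ) := by
    push_cast; ring
  rw [h1, ← Int.natCast_mod, Int.toNat_natCast]

theorem stmt16 (M N L Z Na V : ℕ) (G : ℕ → ℕ → ℕ → ℂ)
    (hN : 2 ≤ N) (hZ1 : 1 ≤ Z) (hZL : Z ≤ L)
    (hNa : 1 ≤ Na) (hNaM : Na ≤ M) (hV : 2 ≤ V)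
    (hG : IsECZCS M N L Z G)
    (k l : ℕ) (hk1 : 1 ≤ k) (hk2 : k ≤ V * Na) (hl1 : 1 ≤ l) (hl2 : l ≤ V * Na)
    (hblock : (k - 1) / Na = (l - 1) / Na) :
    (∀ u : ℕ, u ≤ Z →
      pccf (N * V * L) (trainSeq L N V Na G k) (trainSeq L N V Na G l) (u : ℤ)
        = accfSet L N (G ((k - 1) % Na)) (G ((l - 1) % Na)) (u : ℤ)) ∧
    (∀ u : ℕ, ((k = l ∧ 1 ≤ u ∧ u ≤ Z) ∨ (k ≠ l ∧ u ≤ Z)) →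
      pccf (N * V * L) (trainSeq L N V Na G k) (trainSeq L N V Na G l) (u : ℤ)
        = 0) := by
  have hL : 1 ≤ L := le_trans hZ1 hZL
  have hn0 : 0 < N * V * L := by positivity
  have part1 : ∀ u : ℕ, u ≤ Z →
      pccf (N * V * L) (trainSeq L N V Na G k) (trainSeq L N V Na G l) (u : ℤ)
        = accfSet L N (G ((k - 1) % Na)) (G ((l - 1) % Na)) (u : ℤ) := by
    intro u hu
    unfold pccf trainSeq
    rw [hblock]
    rw [sum_range_rotate (N * V * L) (((l - 1) / Na) * L) hn0]
    rw [← core_identity L N V (G ((k - 1) % Na)) (G ((l - 1) % Na)) u hL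
      (le_trans hu hZL) hV]
    refine Finset.sum_congr rfl ?_
    intro i hi
    have hi' : i < N * V * L := Finset.mem_range.1 hi
    show baseRow L V (G ((k - 1) % Na))
        ((((((((i + ((l - 1) / Na) * L) % (N * V * L) : ℕ) : ℤ) + (u : ℤ))
              % ((N * V * L : ℕ) : ℤ)).toNat : ℤ)
            - (((l - 1) / Na : ℕ) : ℤ) * (L : ℤ)) % ((N * V * L : ℕ) : ℤ)).toNat *
        (starRingEnd ℂ) (baseRow L V (G ((l - 1) % Na))
          (((((i + ((l - 1) / Na) * L) % (N * V * L) : ℕ) : ℤ)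
              - (((l - 1) / Na : ℕ) : ℤ) * (L : ℤ)) % ((N * V * L : ℕ) : ℤ)).toNat)
      = baseRow L V (G ((k - 1) % Na)) ((i + u) % (N * V * L)) *
        (starRingEnd ℂ) (baseRow L V (G ((l - 1) % Na)) i)
    rw [shift_cancel_shifted (N * V * L) ((l - 1) / Na) L i u hn0,
      shift_cancel_base (N * V * L) ((l - 1) / Na) L i hi' hn0]
  refine ⟨part1, ?_⟩
  intro u hcase
  have hm1M : (k - 1) % Na < M := lt_of_lt_of_le (Nat.mod_lt _ (by omega)) hNaM
  have hm2M : (l - 1) % Na < M := lt_of_lt_of_le (Nat.mod_lt _ (by omega)) hNaM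
  have hdegen : ∀ A B : ℕ → ℕ → ℂ, accfSet L N A B ((L : ℕ) : ℤ) = 0 := by
    intro A B
    unfold accfSet accf
    simp
  rcases hcase with ⟨hkl, hu1, huZ⟩ | ⟨hne, huZ⟩
  · rw [part1 u huZ, hkl]
    by_cases huL : u = L
    · rw [huL]; exact hdegen _ _
    · have huL' : u ≤ L - 1 := by omega
      apply hG.1 _ _ hm2M hm2M
      left
      refine ⟨rfl, ?_, ?_, ?_⟩
      · rw [abs_of_nonneg (by positivity : (0:ℤ) ≤ (u:ℤ))]
        left
        exact ⟨by exact_mod_cast hu1, by exact_mod_cast huZ⟩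
      · rw [abs_of_nonneg (by positivity : (0:ℤ) ≤ (u:ℤ))]
        exact_mod_cast hu1
      · rw [abs_of_nonneg (by positivity : (0:ℤ) ≤ (u:ℤ))]
        have : (u : ℤ) ≤ (L : ℤ) - 1 := by
          have : u + 1 ≤ L := by omega
          push_cast
          omega
        exact this
  · rw [part1 u huZ]
    have hmne : (k - 1) % Na ≠ (l - 1) % Na := by
      intro h
      apply hne
      have e1 : Na * ((k - 1) / Na) + (k - 1) % Na = k - 1 := Nat.div_add_mod _ _
      have e2 : Na * ((l - 1) / Na) + (l - 1) % Na = l - 1 := Nat.div_add_mod _ _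
      rw [hblock, h] at e1
      omega
    by_cases huL : u = L
    · rw [huL]; exact hdegen _ _
    · apply hG.1 _ _ hm1M hm2M
      right
      refine ⟨hmne, ?_⟩
      by_cases hu0 : u = 0
      · right; rw [hu0]; rfl
      · left
        rw [abs_of_nonneg (by positivity : (0:ℤ) ≤ (u:ℤ))]
        left
        exact ⟨by exact_mod_cast (by omega : 1 ≤ u), by exact_mod_cast huZ⟩
end
end

section
/- (Training matrix, Case 3: first and last antenna blocks) In the E-CZCS training setting with N ≥ 2, let k ∈ B_1 and l ∈ B_V. Then for every integer u with 1 ≤ u ≤ Z, φ(x_k, x_l; u) = conj(ρ̂(G^{m_l}, G^{m_k}; L−u)) = 0, and also φ(x_k, x_l; 0) = 0; hence φ(x_k, x_l; u) = 0 for all 0 ≤ u ≤ Z. -/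
open Finset

noncomputable section

lemma sum_range_rot (m c : ℕ) (hc : c ≤ m) (f : ℕ → ℂ) :
    ∑ i ∈ Finset.range m, f i = ∑ j ∈ Finset.range m, f ((j + c) % m) := by
  rcases Nat.eq_zero_or_pos m with hm | hm
  · simp [hm]
  refine Finset.sum_nbij' (fun i => (i + (m - c)) % m) (fun j => (j + c) % m)
    (fun a _ => Finset.mem_range.2 (Nat.mod_lt _ hm))
    (fun a _ => Finset.mem_range.2 (Nat.mod_lt _ hm)) ?_ ?_ ?_
  · intro a ha
    show ((a + (m - c)) % m + c) % m = a
    have h1 : a + (m - c) + c = a + m := by omega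
    rw [Nat.mod_add_mod, h1, Nat.add_mod_right, Nat.mod_eq_of_lt (Finset.mem_range.1 ha)]
  · intro a ha
    show ((a + c) % m + (m - c)) % m = a
    have h1 : a + c + (m - c) = a + m := by omega
    rw [Nat.mod_add_mod, h1, Nat.add_mod_right, Nat.mod_eq_of_lt (Finset.mem_range.1 ha)]
  · intro a ha
    show f a = f (((a + (m - c)) % m + c) % m)
    have h1 : a + (m - c) + c = a + m := by omega
    rw [Nat.mod_add_mod, h1, Nat.add_mod_right, Nat.mod_eq_of_lt (Finset.mem_range.1 ha)]

lemma toNat_natmod (i m : ℕ) : (((i : ℤ)) % ((m : ℕ) : ℤ)).toNat = i % m := by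
  rw [← Int.natCast_mod, Int.toNat_natCast]

lemma baseRow_apply (L V q t : ℕ) (Gm : ℕ → ℕ → ℂ) (hV : 0 < V) (ht : t < L) :
    baseRow L V Gm (q * (V * L) + t) = Gm q t := by
  have hW : 0 < V * L := Nat.mul_pos hV (by omega)
  have htW : t < V * L := lt_of_lt_of_le ht (Nat.le_mul_of_pos_left L hV)
  have h1 : (q * (V * L) + t) % (V * L) = t := by
    rw [mul_comm, Nat.mul_add_mod, Nat.mod_eq_of_lt htW]
  have h2 : (q * (V * L) + t) / (V * L) = q := by
    rw [mul_comm, Nat.mul_add_div hW, Nat.div_eq_of_lt htW, add_zero]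
  rw [baseRow, h1, h2, if_pos ht]

lemma baseRow_zero (L V i : ℕ) (Gm : ℕ → ℕ → ℂ) (hi : L ≤ i % (V * L)) :
    baseRow L V Gm i = 0 := by
  rw [baseRow, if_neg (by omega)]

lemma key_sum (N L V u : ℕ) (hN : 2 ≤ N) (hL : 1 ≤ L) (hV : 2 ≤ V) (hu : u ≤ L)
    (Gk Gl : ℕ → ℕ → ℂ) :
    ∑ j ∈ Finset.range (N * V * L),
        baseRow L V Gk ((j + (V - 1) * L + u) % (N * V * L)) *
          (starRingEnd ℂ) (baseRow L V Gl j)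
      = ∑ n ∈ Finset.range N, ∑ s ∈ Finset.range u,
          Gk ((n + 1) % N) s * (starRingEnd ℂ) (Gl n (L - u + s)) := by
  have hm : N * V * L = N * (V * L) := by ring
  rw [hm]
  set W := V * L with hW_def
  set c := (V - 1) * L with hc_def
  have hW : 0 < W := Nat.mul_pos (by omega) (by omega)
  have hcW : c + L = W := by
    rw [hc_def, hW_def]
    have h1 : V - 1 + 1 = V := by omega
    calc (V - 1) * L + L = ((V - 1) + 1) * L := by ring
      _ = V * L := by rw [h1]
  have hLc : L ≤ c := by
    rw [hc_def]
    calc L = 1 * L := (one_mul L).symm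
      _ ≤ (V - 1) * L := Nat.mul_le_mul_right L (by omega)
  have hWm : W ≤ N * W := Nat.le_mul_of_pos_left W (by omega)
  have hWdvd : W ∣ N * W := ⟨N, by ring⟩
  set F : ℕ → ℂ := fun j =>
    baseRow L V Gk ((j + c + u) % (N * W)) * (starRingEnd ℂ) (baseRow L V Gl j) with hF
  set e : ℕ × ℕ → ℕ := fun p => p.1 * W + (L - u + p.2) with he
  set T := Finset.range N ×ˢ Finset.range u with hT
  have hr : ∀ n r : ℕ, r < W → (n * W + r) % W = r := by
    intro n r hrW
    rw [mul_comm, Nat.mul_add_mod, Nat.mod_eq_of_lt hrW]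
  have he_lt : ∀ p ∈ T, e p < N * W := by
    rintro ⟨n, s⟩ hp
    rw [hT, Finset.mem_product, Finset.mem_range, Finset.mem_range] at hp
    have hrW : L - u + s < W := by omega
    calc e (n, s) = n * W + (L - u + s) := rfl
      _ < n * W + W := by omega
      _ = (n + 1) * W := by ring
      _ ≤ N * W := Nat.mul_le_mul_right W (by omega)
  have himg : T.image e ⊆ Finset.range (N * W) := by
    intro j hj
    obtain ⟨p, hp, rfl⟩ := Finset.mem_image.1 hj
    exact Finset.mem_range.2 (he_lt p hp)
  have h0 : ∀ j ∈ Finset.range (N * W), j ∉ T.image e → F j = 0 := by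
    intro j hj hnot
    rw [Finset.mem_range] at hj
    set t := j % W with ht_def
    set n := j / W with hn_def
    have hj1 : n * W + t = j := by rw [hn_def, ht_def, mul_comm]; exact Nat.div_add_mod j W
    have htW : t < W := Nat.mod_lt _ hW
    have hnN : n < N := by
      rw [hn_def]
      exact (Nat.div_lt_iff_lt_mul hW).2 hj
    by_cases h1 : L ≤ t
    · rw [hF]
      have : baseRow L V Gl j = 0 := baseRow_zero L V j Gl (by rw [← hW_def, ← ht_def]; exact h1)
      simp [this]
    · push_neg at h1
      by_cases h2 : L ≤ t + u
      · exfalso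
        apply hnot
        refine Finset.mem_image.2 ⟨(n, t - (L - u)), ?_, ?_⟩
        · rw [hT, Finset.mem_product, Finset.mem_range, Finset.mem_range]
          exact ⟨hnN, by omega⟩
        · show n * W + (L - u + (t - (L - u))) = j
          have h3 : L - u + (t - (L - u)) = t := by omega
          rw [h3]; exact hj1
      · push_neg at h2
        have key : (j + c + u) % (N * W) % W = t + c + u := by
          rw [Nat.mod_mod_of_dvd _ hWdvd]
          have h4 : j + c + u = n * W + (t + c + u) := by
            calc j + c + u = (n * W + t) + c + u := by rw [hj1]
              _ = n * W + (t + c + u) := by ring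
          rw [h4]
          exact hr n _ (by omega)
        rw [hF]
        have : baseRow L V Gk ((j + c + u) % (N * W)) = 0 := by
          apply baseRow_zero
          rw [← hW_def, key]
          omega
        simp [this]
  have hinj : ∀ p1 ∈ T, ∀ p2 ∈ T, e p1 = e p2 → p1 = p2 := by
    rintro ⟨n1, s1⟩ h1 ⟨n2, s2⟩ h2 heq
    rw [hT, Finset.mem_product, Finset.mem_range, Finset.mem_range] at h1 h2
    have hr1 : L - u + s1 < W := by omega
    have hr2 : L - u + s2 < W := by omega
    have hmod : (e (n1, s1)) % W = (e (n2, s2)) % W := by rw [heq]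
    rw [show e (n1, s1) = n1 * W + (L - u + s1) from rfl,
      show e (n2, s2) = n2 * W + (L - u + s2) from rfl, hr n1 _ hr1, hr n2 _ hr2] at hmod
    have hs : s1 = s2 := by omega
    subst hs
    have heq' : n1 * W + (L - u + s1) = n2 * W + (L - u + s1) := heq
    have : n1 * W = n2 * W := by omega
    have : n1 = n2 := Nat.eq_of_mul_eq_mul_right hW this
    simp [this]
  calc ∑ j ∈ Finset.range (N * W), F j
      = ∑ j ∈ T.image e, F j := (Finset.sum_subset himg h0).symm
    _ = ∑ p ∈ T, F (e p) := Finset.sum_image hinj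
    _ = ∑ n ∈ Finset.range N, ∑ s ∈ Finset.range u, F (e (n, s)) := Finset.sum_product _ _ _
    _ = ∑ n ∈ Finset.range N, ∑ s ∈ Finset.range u,
          Gk ((n + 1) % N) s * (starRingEnd ℂ) (Gl n (L - u + s)) := by
        refine Finset.sum_congr rfl fun n hn => Finset.sum_congr rfl fun s hs => ?_
        rw [Finset.mem_range] at hn hs
        have hsL : L - u + s < L := by omega
        have hB : baseRow L V Gl (e (n, s)) = Gl n (L - u + s) := by
          show baseRow L V Gl (n * W + (L - u + s)) = _
          rw [hW_def]
          exact baseRow_apply L V n _ Gl (by omega) hsL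
        have harg : e (n, s) + c + u = (n + 1) * W + s := by
          have h3 : L - u + s + c + u = W + s := by omega
          calc e (n, s) + c + u = n * W + (L - u + s + c + u) := by
                show n * W + (L - u + s) + c + u = _; ring
            _ = n * W + (W + s) := by rw [h3]
            _ = (n + 1) * W + s := by ring
        have hidx : ((n + 1) * W + s) % (N * W) = ((n + 1) % N) * W + s := by
          rcases eq_or_lt_of_le (show n + 1 ≤ N by omega) with h | h
          · rw [h, Nat.mod_self, zero_mul, zero_add, Nat.add_mod_left,
              Nat.mod_eq_of_lt (by omega : s < N * W)]
          · rw [Nat.mod_eq_of_lt h]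
            apply Nat.mod_eq_of_lt
            calc (n + 1) * W + s < (n + 1) * W + W := by omega
              _ = (n + 2) * W := by ring
              _ ≤ N * W := Nat.mul_le_mul_right W (by omega)
        have hA : baseRow L V Gk ((e (n, s) + c + u) % (N * W)) = Gk ((n + 1) % N) s := by
          rw [harg, hidx, hW_def]
          exact baseRow_apply L V _ _ Gk (by omega) (by omega)
        rw [hF]
        simp only
        rw [hA, hB]

lemma rot_step (m c u : ℕ) (hc : c ≤ m) (A B : ℕ → ℂ) :
    ∑ i ∈ Finset.range m, A ((i + u) % m) * (starRingEnd ℂ) (B ((i + (m - c)) % m))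
      = ∑ j ∈ Finset.range m, A ((j + c + u) % m) * (starRingEnd ℂ) (B j) := by
  rw [sum_range_rot m c hc]
  refine Finset.sum_congr rfl fun j hj => ?_
  congr 2
  · exact Nat.mod_add_mod _ _ _
  · rw [Nat.mod_add_mod]
    have h1 : j + c + (m - c) = j + m := by omega
    rw [h1, Nat.add_mod_right, Nat.mod_eq_of_lt (Finset.mem_range.1 hj)]

theorem stmt18 (M N L Z Na V : ℕ) (G : ℕ → ℕ → ℕ → ℂ)
    (hN : 2 ≤ N) (hZ1 : 1 ≤ Z) (hZL : Z ≤ L)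
    (hNa : 1 ≤ Na) (hNaM : Na ≤ M) (hV : 2 ≤ V)
    (hG : IsECZCS M N L Z G)
    (k l : ℕ) (hk1 : 1 ≤ k) (hk2 : k ≤ Na)
    (hl1 : (V - 1) * Na + 1 ≤ l) (hl2 : l ≤ V * Na) :
    (∀ u : ℕ, 1 ≤ u → u ≤ Z →
      pccf (N * V * L) (trainSeq L N V Na G k) (trainSeq L N V Na G l) (u : ℤ)
          = (starRingEnd ℂ)
            (accfHat L N (G ((l - 1) % Na)) (G ((k - 1) % Na)) ((L : ℤ) - (u : ℤ))) ∧
      pccf (N * V * L) (trainSeq L N V Na G k) (trainSeq L N V Na G l) (u : ℤ)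
          = 0) ∧
    pccf (N * V * L) (trainSeq L N V Na G k) (trainSeq L N V Na G l) 0 = 0 ∧
    (∀ u : ℕ, u ≤ Z →
      pccf (N * V * L) (trainSeq L N V Na G k) (trainSeq L N V Na G l) (u : ℤ)
        = 0) := by
  have hL : 1 ≤ L := le_trans hZ1 hZL
  have hm0 : 0 < N * V * L := by
    have : 0 < N * V := Nat.mul_pos (by omega) (by omega)
    exact Nat.mul_pos this (by omega)
  have hcm : (V - 1) * L ≤ N * V * L := by
    calc (V - 1) * L ≤ V * L := Nat.mul_le_mul_right L (by omega)
      _ ≤ N * (V * L) := Nat.le_mul_of_pos_left _ (by omega)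
      _ = N * V * L := by ring
  have hkdiv : (k - 1) / Na = 0 := Nat.div_eq_of_lt (by omega)
  have hldiv : (l - 1) / Na = V - 1 := by
    apply Nat.div_eq_of_lt_le
    · exact Nat.le_sub_one_of_lt hl1
    · rw [show V - 1 + 1 = V by omega]
      exact lt_of_lt_of_le (Nat.sub_lt (by omega) one_pos) hl2
  have hxk : ∀ i : ℕ, trainSeq L N V Na G k i
      = baseRow L V (G ((k - 1) % Na)) (i % (N * V * L)) := by
    intro i
    show baseRow L V (G ((k - 1) % Na))
        ((((i : ℤ) - (((k - 1) / Na : ℕ) : ℤ) * (L : ℤ)) % ((N * V * L : ℕ) : ℤ)).toNat) = _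
    rw [hkdiv]
    simp only [Nat.cast_zero, zero_mul, sub_zero]
    rw [toNat_natmod]
  have hxl : ∀ i : ℕ, trainSeq L N V Na G l i
      = baseRow L V (G ((l - 1) % Na))
          ((i + (N * V * L - (V - 1) * L)) % (N * V * L)) := by
    intro i
    show baseRow L V (G ((l - 1) % Na))
        ((((i : ℤ) - (((l - 1) / Na : ℕ) : ℤ) * (L : ℤ)) % ((N * V * L : ℕ) : ℤ)).toNat) = _
    rw [hldiv]
    congr 1
    have h3 : ((i + (N * V * L - (V - 1) * L) : ℕ) : ℤ)
        = (i : ℤ) - ((V - 1 : ℕ) : ℤ) * (L : ℤ) + ((N * V * L : ℕ) : ℤ) := by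
      rw [Nat.cast_add, Nat.cast_sub hcm]; push_cast; ring
    have h4 : ((i : ℤ) - ((V - 1 : ℕ) : ℤ) * (L : ℤ)) % ((N * V * L : ℕ) : ℤ)
        = (((i + (N * V * L - (V - 1) * L) : ℕ) : ℤ)) % ((N * V * L : ℕ) : ℤ) := by
      rw [h3]; simp
    rw [h4, toNat_natmod]
  have hpc : ∀ u : ℕ, pccf (N * V * L) (trainSeq L N V Na G k) (trainSeq L N V Na G l) (u : ℤ)
      = ∑ i ∈ Finset.range (N * V * L),
          baseRow L V (G ((k - 1) % Na)) ((i + u) % (N * V * L)) *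
            (starRingEnd ℂ) (baseRow L V (G ((l - 1) % Na))
              ((i + (N * V * L - (V - 1) * L)) % (N * V * L))) := by
    intro u
    rw [pccf]
    refine Finset.sum_congr rfl fun i hi => ?_
    rw [hxl i]
    congr 1
    have h5 : (((i : ℤ) + (u : ℤ)) % ((N * V * L : ℕ) : ℤ)).toNat = (i + u) % (N * V * L) := by
      rw [← Nat.cast_add, toNat_natmod]
    rw [h5, hxk]
    congr 1
    exact Nat.mod_eq_of_lt (Nat.mod_lt _ hm0)
  have main : ∀ u : ℕ, u ≤ L →
      pccf (N * V * L) (trainSeq L N V Na G k) (trainSeq L N V Na G l) (u : ℤ)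
        = ∑ n ∈ Finset.range N, ∑ s ∈ Finset.range u,
            G ((k - 1) % Na) ((n + 1) % N) s *
              (starRingEnd ℂ) (G ((l - 1) % Na) n (L - u + s)) := by
    intro u hu
    rw [hpc u, rot_step _ _ u hcm, key_sum N L V u hN hL hV hu]
  have hconj : ∀ u : ℕ, u ≤ L →
      (starRingEnd ℂ) (accfHat L N (G ((l - 1) % Na)) (G ((k - 1) % Na)) ((L : ℤ) - (u : ℤ)))
        = ∑ n ∈ Finset.range N, ∑ s ∈ Finset.range u,
            G ((k - 1) % Na) ((n + 1) % N) s *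
              (starRingEnd ℂ) (G ((l - 1) % Na) n (L - u + s)) := by
    intro u hu
    rw [accfHat, map_sum]
    refine Finset.sum_congr rfl fun n hn => ?_
    rw [accf, if_pos (by omega : (0 : ℤ) ≤ (L : ℤ) - (u : ℤ))]
    have ht : ((L : ℤ) - (u : ℤ)).toNat = L - u := by omega
    rw [ht, show L - (L - u) = u by omega, map_sum]
    refine Finset.sum_congr rfl fun s hs => ?_
    rw [map_mul, show s + (L - u) = L - u + s by omega]
    simp [mul_comm]
  have hzero : ∀ u : ℕ, 1 ≤ u → u ≤ Z →
      accfHat L N (G ((l - 1) % Na)) (G ((k - 1) % Na)) ((L : ℤ) - (u : ℤ)) = 0 := by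
    intro u h1 h2
    apply hG.2 _ _ (lt_of_lt_of_le (Nat.mod_lt _ (by omega)) hNaM)
      (lt_of_lt_of_le (Nat.mod_lt _ (by omega)) hNaM)
    rw [abs_of_nonneg (by omega : (0 : ℤ) ≤ (L : ℤ) - (u : ℤ))]
    omega
  have P1 : ∀ u : ℕ, 1 ≤ u → u ≤ Z →
      pccf (N * V * L) (trainSeq L N V Na G k) (trainSeq L N V Na G l) (u : ℤ)
          = (starRingEnd ℂ)
            (accfHat L N (G ((l - 1) % Na)) (G ((k - 1) % Na)) ((L : ℤ) - (u : ℤ))) ∧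
      pccf (N * V * L) (trainSeq L N V Na G k) (trainSeq L N V Na G l) (u : ℤ) = 0 := by
    intro u h1 h2
    have e1 : pccf (N * V * L) (trainSeq L N V Na G k) (trainSeq L N V Na G l) (u : ℤ)
        = (starRingEnd ℂ)
            (accfHat L N (G ((l - 1) % Na)) (G ((k - 1) % Na)) ((L : ℤ) - (u : ℤ))) := by
      rw [main u (le_trans h2 hZL), hconj u (le_trans h2 hZL)]
    exact ⟨e1, by rw [e1, hzero u h1 h2, map_zero]⟩
  have P2 : pccf (N * V * L) (trainSeq L N V Na G k) (trainSeq L N V Na G l) 0 = 0 := by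
    have := main 0 (Nat.zero_le L)
    simpa using this
  refine ⟨P1, P2, fun u hu => ?_⟩
  rcases Nat.eq_zero_or_pos u with h | h
  · subst h; simpa using P2
  · exact (P1 u h hu).2
end
end
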